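/- If S is a ∀⁺ type of System F and τ ∈ |S|_𝓘, then Γ⁻ ⊢_F⁺ τ : S, i.e., there is τ' with τ →_β τ' and Γ⁻_{τ'} ⊢_F τ' : S; and, simultaneously, if S is a ∀⁻ type and Γ⁻ ⊢_F⁺ τ : S, then τ ∈ |S|_𝓘. -/
import Mathlib


/-! Untyped λ-calculus (de Bruijn) and System F realizability semantics. -/

/-- Untyped λ-terms in de Bruijn notation. -/
inductive Lam : Type
  | var : ℕ → Lam
  | app : Lam → Lam → Lam
  | lam : Lam → Lam
deriving DecidableEq

namespace Lam

/-- Shift the free variables ≥ `d` up by one. -/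
def lift (d : ℕ) : Lam → Lam
  | var n => if n < d then var n else var (n + 1)
  | app t u => app (lift d t) (lift d u)
  | lam t => lam (lift (d + 1) t)

/-- Capture-avoiding substitution of `u` for the variable `k` (de Bruijn). -/
def subst : Lam → ℕ → Lam → Lam
  | var n, k, u => if n = k then u else if k < n then var (n - 1) else var n
  | app t s, k, u => app (subst t k u) (subst s k u)
  | lam t, k, u => lam (subst t (k + 1) (lift 0 u))

/-- Free variables of a term. -/
def fv : Lam → Finset ℕ
  | var n => {n}
  | app t u => fv t ∪ fv u
  | lam t => ((fv t).erase 0).image (· - 1)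

/-- One-step β-reduction. -/
inductive Beta : Lam → Lam → Prop
  | beta (t u : Lam) : Beta (app (lam t) u) (subst t 0 u)
  | appL {t t' : Lam} (u : Lam) : Beta t t' → Beta (app t u) (app t' u)
  | appR (t : Lam) {u u' : Lam} : Beta u u' → Beta (app t u) (app t u')
  | lam {t t' : Lam} : Beta t t' → Beta (lam t) (lam t')

/-- Many-step β-reduction. -/
def BetaStar : Lam → Lam → Prop := Relation.ReflTransGen Beta

/-- β-equivalence. -/
def BetaEq : Lam → Lam → Prop := Relation.EqvGen Beta

/-- One-step η-reduction. -/
inductive Eta : Lam → Lam → Prop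
  | eta (t : Lam) : Eta (lam (app (lift 0 t) (var 0))) t
  | appL {t t' : Lam} (u : Lam) : Eta t t' → Eta (app t u) (app t' u)
  | appR (t : Lam) {u u' : Lam} : Eta u u' → Eta (app t u) (app t u')
  | lam {t t' : Lam} : Eta t t' → Eta (lam t) (lam t')

/-- βη-equivalence. -/
def BetaEtaEq : Lam → Lam → Prop := Relation.EqvGen (fun t u => Beta t u ∨ Eta t u)

/-- One-step weak head reduction: contracts the weak head redex `(λ t) u`
possibly applied to further arguments. -/
inductive Whr : Lam → Lam → Prop
  | head (t u : Lam) : Whr (app (lam t) u) (subst t 0 u)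
  | appL {t t' : Lam} (u : Lam) : Whr t t' → Whr (app t u) (app t' u)

/-- Many-step weak head reduction (`≻_f`). -/
def WhrStar : Lam → Lam → Prop := Relation.ReflTransGen Whr

/-- A term is normal when it has no β-redex. -/
def Normal (t : Lam) : Prop := ∀ u, ¬ Beta t u

def Normalizable (t : Lam) : Prop := ∃ u, BetaStar t u ∧ Normal u

/-- `(t)v₁…vₘ`. -/
def appList (t : Lam) (l : List Lam) : Lam := l.foldl app t

end Lam

/-- A set of λ-terms is saturated when it is closed under weak-head-expansion. -/
def Saturated (G : Set Lam) : Prop := ∀ t u : Lam, Lam.WhrStar t u → u ∈ G → t ∈ G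

/-- A set of λ-terms is β-saturated when it is closed under β-expansion. -/
def BetaSaturated (G : Set Lam) : Prop := ∀ t u : Lam, Lam.BetaStar t u → u ∈ G → t ∈ G

/-- `G → G' = {u : ∀ t ∈ G, (u)t ∈ G'}`. -/
def arrowSet (G G' : Set Lam) : Set Lam := {u | ∀ t ∈ G, Lam.app u t ∈ G'}

/-- Types of System F (de Bruijn type variables). -/
inductive Ty : Type
  | var : ℕ → Ty
  | arr : Ty → Ty → Ty
  | all : Ty → Ty
deriving DecidableEq

namespace Ty

/-- Shift the free type variables ≥ `d` up by one. -/
def lift (d : ℕ) : Ty → Ty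
  | var n => if n < d then var n else var (n + 1)
  | arr A B => arr (lift d A) (lift d B)
  | all A => all (lift (d + 1) A)

/-- Capture-avoiding substitution of the type `C` for the type variable `k`. -/
def subst : Ty → ℕ → Ty → Ty
  | var n, k, C => if n = k then C else if k < n then var (n - 1) else var n
  | arr A B, k, C => arr (subst A k C) (subst B k C)
  | all A, k, C => all (subst A (k + 1) (lift 0 C))

/-- Free type variables. -/
def fv : Ty → Finset ℕ
  | var n => {n}
  | arr A B => fv A ∪ fv B
  | all A => ((fv A).erase 0).image (· - 1)

end Ty

mutual
  /-- ∀⁺ types: types with positive quantifiers. -/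
  inductive PosTy : Ty → Prop
    | var (n : ℕ) : PosTy (Ty.var n)
    | arr {B A : Ty} : NegTy B → PosTy A → PosTy (Ty.arr B A)
    | all {A : Ty} : PosTy A → 0 ∈ A.fv → PosTy (Ty.all A)
  /-- ∀⁻ types: types with negative quantifiers. -/
  inductive NegTy : Ty → Prop
    | var (n : ℕ) : NegTy (Ty.var n)
    | arr {B A : Ty} : PosTy B → NegTy A → NegTy (Ty.arr B A)
end

/-- Typing contexts: a partial assignment of types to (de Bruijn) term variables. -/
def Ctx : Type := ℕ → Option Ty

def Ctx.empty : Ctx := fun _ => none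

def Ctx.cons (B : Ty) (Γ : Ctx) : Ctx := fun n =>
  match n with
  | 0 => some B
  | n + 1 => Γ n

/-- Shift all type variables of a context (used for ∀-introduction: the fresh
type variable `0` does not occur in the shifted context). -/
def Ctx.liftTy (Γ : Ctx) : Ctx := fun n => (Γ n).map (Ty.lift 0)

/-- Curry-style typing of System F. -/
inductive TyJ : Ctx → Lam → Ty → Prop
  | var {Γ : Ctx} {x : ℕ} {A : Ty} : Γ x = some A → TyJ Γ (Lam.var x) A
  | lam {Γ : Ctx} {B C : Ty} {t : Lam} :
      TyJ (Ctx.cons B Γ) t C → TyJ Γ (Lam.lam t) (Ty.arr B C)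
  | app {Γ : Ctx} {B C : Ty} {u v : Lam} :
      TyJ Γ u (Ty.arr B C) → TyJ Γ v B → TyJ Γ (Lam.app u v) C
  | allI {Γ : Ctx} {A : Ty} {t : Lam} :
      TyJ (Ctx.liftTy Γ) t A → TyJ Γ t (Ty.all A)
  | allE {Γ : Ctx} {A : Ty} {t : Lam} (C : Ty) :
      TyJ Γ t (Ty.all A) → TyJ Γ t (Ty.subst A 0 C)

/-- System F0 : System F where ∀-elimination only instantiates by type variables. -/
inductive TyJ0 : Ctx → Lam → Ty → Prop
  | var {Γ : Ctx} {x : ℕ} {A : Ty} : Γ x = some A → TyJ0 Γ (Lam.var x) A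
  | lam {Γ : Ctx} {B C : Ty} {t : Lam} :
      TyJ0 (Ctx.cons B Γ) t C → TyJ0 Γ (Lam.lam t) (Ty.arr B C)
  | app {Γ : Ctx} {B C : Ty} {u v : Lam} :
      TyJ0 Γ u (Ty.arr B C) → TyJ0 Γ v B → TyJ0 Γ (Lam.app u v) C
  | allI {Γ : Ctx} {A : Ty} {t : Lam} :
      TyJ0 (Ctx.liftTy Γ) t A → TyJ0 Γ t (Ty.all A)
  | allE {Γ : Ctx} {A : Ty} {t : Lam} (Y : ℕ) :
      TyJ0 Γ t (Ty.all A) → TyJ0 Γ t (Ty.subst A 0 (Ty.var Y))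

/-- Interpretations: assignments of sets of λ-terms to type variables. -/
def Interp : Type := ℕ → Set Lam

def Interp.cons (G : Set Lam) (I : Interp) : Interp := fun n =>
  match n with
  | 0 => G
  | n + 1 => I n

/-- Interpretation of types, parameterized by the admissibility class `C` of
sets used to interpret type variables (e.g. `Saturated`). -/
def interpC (C : Set Lam → Prop) : Ty → Interp → Set Lam
  | Ty.var n, I => I n
  | Ty.arr A B, I => arrowSet (interpC C A I) (interpC C B I)
  | Ty.all A, I => ⋂ (G : Set Lam) (_ : C G), interpC C A (Interp.cons G I)

/-- Girard–Krivine interpretation `|A|_I` with saturated sets. -/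
def interp : Ty → Interp → Set Lam := interpC Saturated

/-- `|A|`, the intersection of `|A|_I` over all admissible interpretations. -/
def SemC (C : Set Lam → Prop) (A : Ty) : Set Lam :=
  {t | ∀ I : Interp, (∀ n, C (I n)) → t ∈ interpC C A I}

/-- `|A| = ⋂_I |A|_I` over interpretations into saturated sets. -/
def Sem (A : Ty) : Set Lam := SemC Saturated A

/-- `Γ⁻_u`: the restriction of the full context `Γ⁻` (given by `Γm`) to the
free variables of `u`. -/
def ctxOf (Γm : ℕ → Ty) (u : Lam) : Ctx := fun x => if x ∈ u.fv then some (Γm x) else none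

/-- `Γ⁻ ⊢_F⁺ u : A`: some β-reduct `u'` of `u` satisfies `Γ⁻_{u'} ⊢_F u' : A`. -/
def DerPlus (Γm : ℕ → Ty) (u : Lam) (A : Ty) : Prop :=
  ∃ u', Lam.BetaStar u u' ∧ TyJ (ctxOf Γm u') u' A
/-! ### σ-calculus for `Ty` -/

namespace Ty

@[simp] lemma fv_var' (n : ℕ) : fv (var n) = {n} := rfl
@[simp] lemma fv_arr' (A B : Ty) : fv (arr A B) = fv A ∪ fv B := rfl

lemma mem_fv_all {m : ℕ} {A : Ty} : m ∈ fv (all A) ↔ m + 1 ∈ fv A := by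
  show m ∈ ((fv A).erase 0).image (· - 1) ↔ _
  simp only [Finset.mem_image, Finset.mem_erase]
  constructor
  · rintro ⟨j, ⟨hj0, hj⟩, rfl⟩
    have hje : j - 1 + 1 = j := by omega
    rwa [hje]
  · intro h; exact ⟨m + 1, ⟨Nat.succ_ne_zero m, h⟩, rfl⟩

/-- lifting a renaming under a binder -/
def upr (ρ : ℕ → ℕ) : ℕ → ℕ
  | 0 => 0
  | n + 1 => ρ n + 1

/-- renaming of type variables -/
def ren (ρ : ℕ → ℕ) : Ty → Ty
  | var n => var (ρ n)
  | arr A B => arr (ren ρ A) (ren ρ B)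
  | all A => all (ren (upr ρ) A)

@[simp] lemma ren_var (ρ : ℕ → ℕ) (n : ℕ) : ren ρ (var n) = var (ρ n) := rfl
@[simp] lemma ren_arr (ρ : ℕ → ℕ) (A B : Ty) :
    ren ρ (arr A B) = arr (ren ρ A) (ren ρ B) := rfl
@[simp] lemma ren_all (ρ : ℕ → ℕ) (A : Ty) : ren ρ (all A) = all (ren (upr ρ) A) := rfl

lemma ren_congr {ρ ρ' : ℕ → ℕ} {A : Ty} (h : ∀ n ∈ fv A, ρ n = ρ' n) :
    ren ρ A = ren ρ' A := by
  induction A generalizing ρ ρ' with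
  | var n => simp [h n (by simp)]
  | arr A B ihA ihB =>
      simp only [ren_arr]
      rw [ihA (fun n hn => h n (by simp [hn])), ihB (fun n hn => h n (by simp [hn]))]
  | all A ih =>
      simp only [ren_all]
      rw [ih (fun n hn => ?_)]
      cases n with
      | zero => rfl
      | succ n => show ρ n + 1 = ρ' n + 1; rw [h n (mem_fv_all.2 hn)]

lemma fv_ren {m : ℕ} {ρ : ℕ → ℕ} {A : Ty} :
    m ∈ fv (ren ρ A) ↔ ∃ n ∈ fv A, ρ n = m := by
  induction A generalizing m ρ with
  | var n => simp [eq_comm]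
  | arr A B ihA ihB => simp [ihA, ihB, or_and_right, exists_or]
  | all A ih =>
      rw [ren_all, mem_fv_all, ih]
      constructor
      · rintro ⟨n, hn, hup⟩
        cases n with
        | zero => exact absurd hup (by simp [upr])
        | succ n =>
            refine ⟨n, mem_fv_all.2 hn, ?_⟩
            have : ρ n + 1 = m + 1 := hup
            omega
      · rintro ⟨n, hn, rfl⟩
        exact ⟨n + 1, mem_fv_all.1 hn, rfl⟩

lemma ren_ren (ρ ρ' : ℕ → ℕ) (A : Ty) :
    ren ρ (ren ρ' A) = ren (fun n => ρ (ρ' n)) A := by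
  induction A generalizing ρ ρ' with
  | var n => rfl
  | arr A B ihA ihB => simp [ihA, ihB]
  | all A ih =>
      simp only [ren_all, ih]
      rw [ren_congr (fun n _ => ?_)]
      cases n with
      | zero => rfl
      | succ n => rfl

lemma ren_id {ρ : ℕ → ℕ} {A : Ty} (h : ∀ n ∈ fv A, ρ n = n) : ren ρ A = A := by
  induction A generalizing ρ with
  | var n => simp [h n (by simp)]
  | arr A B ihA ihB =>
      simp only [ren_arr]
      rw [ihA (fun n hn => h n (by simp [hn])), ihB (fun n hn => h n (by simp [hn]))]
  | all A ih =>
      simp only [ren_all]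
      rw [ih (fun n hn => ?_)]
      cases n with
      | zero => rfl
      | succ n => show ρ n + 1 = n + 1; rw [h n (mem_fv_all.2 hn)]

lemma lift_eq_ren (d : ℕ) (A : Ty) :
    lift d A = ren (fun n => if n < d then n else n + 1) A := by
  induction A generalizing d with
  | var n => simp [lift, apply_ite var]
  | arr A B ihA ihB => simp [lift, ihA, ihB]
  | all A ih =>
      simp only [lift, ih, ren_all]
      congr 1
      apply ren_congr (fun n _ => ?_)
      cases n with
      | zero => simp [upr]
      | succ n =>
          show (if n + 1 < d + 1 then n + 1 else n + 2) = (if n < d then n else n + 1) + 1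
          by_cases h : n < d <;> simp [h, Nat.succ_lt_succ_iff]

lemma lift0_eq_ren (A : Ty) : lift 0 A = ren Nat.succ A := by
  rw [lift_eq_ren]; exact ren_congr (fun n _ => by simp)

/-- substitution cons -/
def scons (C : Ty) (σ : ℕ → Ty) : ℕ → Ty
  | 0 => C
  | n + 1 => σ n

def ups (σ : ℕ → Ty) : ℕ → Ty := scons (var 0) (fun n => ren Nat.succ (σ n))

/-- parallel substitution -/
def psub (σ : ℕ → Ty) : Ty → Ty
  | var n => σ n
  | arr A B => arr (psub σ A) (psub σ B)
  | all A => all (psub (ups σ) A)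

@[simp] lemma psub_var (σ : ℕ → Ty) (n : ℕ) : psub σ (var n) = σ n := rfl
@[simp] lemma psub_arr (σ : ℕ → Ty) (A B : Ty) :
    psub σ (arr A B) = arr (psub σ A) (psub σ B) := rfl
@[simp] lemma psub_all (σ : ℕ → Ty) (A : Ty) : psub σ (all A) = all (psub (ups σ) A) := rfl

lemma psub_ext {σ σ' : ℕ → Ty} (h : ∀ n, σ n = σ' n) (A : Ty) : psub σ A = psub σ' A := by
  have : σ = σ' := funext h
  rw [this]

lemma psub_congr {σ σ' : ℕ → Ty} {A : Ty} (h : ∀ n ∈ fv A, σ n = σ' n) :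
    psub σ A = psub σ' A := by
  induction A generalizing σ σ' with
  | var n => simp [h n (by simp)]
  | arr A B ihA ihB =>
      simp only [psub_arr]
      rw [ihA (fun n hn => h n (by simp [hn])), ihB (fun n hn => h n (by simp [hn]))]
  | all A ih =>
      simp only [psub_all]
      rw [ih (fun n hn => ?_)]
      cases n with
      | zero => rfl
      | succ n => show ren _ _ = ren _ _ ; rw [h n (mem_fv_all.2 hn)]

lemma ren_eq_psub (ρ : ℕ → ℕ) (A : Ty) : ren ρ A = psub (fun n => var (ρ n)) A := by
  induction A generalizing ρ with
  | var n => rfl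
  | arr A B ihA ihB => simp [ihA, ihB]
  | all A ih =>
      simp only [ren_all, psub_all, ih]
      congr 1
      apply psub_congr (fun n _ => ?_)
      cases n with
      | zero => rfl
      | succ n => rfl

lemma psub_ren (σ : ℕ → Ty) (ρ : ℕ → ℕ) (A : Ty) :
    psub σ (ren ρ A) = psub (fun n => σ (ρ n)) A := by
  induction A generalizing σ ρ with
  | var n => rfl
  | arr A B ihA ihB => simp [ihA, ihB]
  | all A ih =>
      simp only [ren_all, psub_all, ih]
      congr 1
      apply psub_congr (fun n _ => ?_)
      cases n with
      | zero => rfl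
      | succ n => rfl

lemma ren_psub (ρ : ℕ → ℕ) (σ : ℕ → Ty) (A : Ty) :
    ren ρ (psub σ A) = psub (fun n => ren ρ (σ n)) A := by
  induction A generalizing σ ρ with
  | var n => rfl
  | arr A B ihA ihB => simp [ihA, ihB]
  | all A ih =>
      simp only [psub_all, ren_all, ih]
      congr 1
      apply psub_congr (fun n _ => ?_)
      cases n with
      | zero => rfl
      | succ n =>
          show ren (upr ρ) (ren Nat.succ (σ n)) = ren Nat.succ (ren ρ (σ n))
          rw [ren_ren, ren_ren]
          exact ren_congr (fun m _ => rfl)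

lemma psub_psub (σ' σ : ℕ → Ty) (A : Ty) :
    psub σ' (psub σ A) = psub (fun n => psub σ' (σ n)) A := by
  induction A generalizing σ σ' with
  | var n => rfl
  | arr A B ihA ihB => simp [ihA, ihB]
  | all A ih =>
      simp only [psub_all, ih]
      apply congrArg
      apply psub_congr (fun n _ => ?_)
      cases n with
      | zero => rfl
      | succ n =>
          show psub (ups σ') (ren Nat.succ (σ n)) = ren Nat.succ (psub σ' (σ n))
          rw [psub_ren, ren_psub]
          exact psub_congr (fun m _ => rfl)

lemma psub_id (A : Ty) : psub var A = A := by
  induction A with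
  | var n => rfl
  | arr A B ihA ihB => simp [ihA, ihB]
  | all A ih =>
      simp only [psub_all]
      rw [psub_ext (fun n => ?_) A, ih]
      cases n with
      | zero => rfl
      | succ n => rfl

/-- the substitution realizing `subst · k C` -/
def sσ (k : ℕ) (C : Ty) : ℕ → Ty := fun n => if n = k then C else if k < n then var (n - 1) else var n

lemma subst_eq_psub (A : Ty) (k : ℕ) (C : Ty) : subst A k C = psub (sσ k C) A := by
  induction A generalizing k C with
  | var n => rfl
  | arr A B ihA ihB => simp [subst, ihA, ihB]
  | all A ih =>
      simp only [subst, psub_all, ih]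
      congr 1
      apply psub_congr (fun n _ => ?_)
      cases n with
      | zero => simp [sσ, ups, scons]
      | succ n =>
          show sσ (k+1) (lift 0 C) (n+1) = ren Nat.succ (sσ k C n)
          simp only [sσ, ups, scons]
          rcases Nat.lt_trichotomy n k with h | rfl | h
          · have h1 : ¬ (n + 1 = k + 1) := by omega
            have h2 : ¬ (k + 1 < n + 1) := by omega
            have h3 : ¬ (n = k) := by omega
            have h4 : ¬ (k < n) := by omega
            simp [h1, h2, h3, h4]
          · simp [lift0_eq_ren]
          · have h1 : ¬ (n + 1 = k + 1) := by omega
            have h2 : (k + 1 < n + 1) := by omega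
            have h3 : ¬ (n = k) := by omega
            have h5 : n + 1 - 1 = n - 1 + 1 := by omega
            simp [h1, h2, h3, h, h5]

lemma fv_psub {m : ℕ} {σ : ℕ → Ty} {A : Ty} :
    m ∈ fv (psub σ A) ↔ ∃ n ∈ fv A, m ∈ fv (σ n) := by
  induction A generalizing m σ with
  | var n => simp
  | arr A B ihA ihB => simp [ihA, ihB, or_and_right, exists_or]
  | all A ih =>
      rw [psub_all, mem_fv_all, ih]
      constructor
      · rintro ⟨n, hn, hm⟩
        cases n with
        | zero =>
            have : m + 1 ∈ fv (var 0) := hm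
            simp at this
        | succ n =>
            refine ⟨n, mem_fv_all.2 hn, ?_⟩
            have : m + 1 ∈ fv (ren Nat.succ (σ n)) := hm
            rw [fv_ren] at this
            obtain ⟨j, hj, hjm⟩ := this
            have : j = m := by omega
            rwa [this] at hj
      · rintro ⟨n, hn, hm⟩
        refine ⟨n + 1, mem_fv_all.1 hn, ?_⟩
        show m + 1 ∈ fv (ren Nat.succ (σ n))
        rw [fv_ren]
        exact ⟨m, hm, rfl⟩

/-- size of a type -/
def tsize : Ty → ℕ
  | var _ => 1
  | arr A B => tsize A + tsize B + 1
  | all A => tsize A + 1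

lemma tsize_ren (ρ : ℕ → ℕ) (A : Ty) : tsize (ren ρ A) = tsize A := by
  induction A generalizing ρ with
  | var n => rfl
  | arr A B ihA ihB => simp [tsize, ihA, ihB]
  | all A ih => simp [tsize, ih]

end Ty
/-! ### Derived `Ty` lemmas, vacuous-quantifier normalization, Pos/Neg facts -/

namespace Ty

@[simp] lemma sσ_self (k : ℕ) (C : Ty) : sσ k C k = C := by simp [sσ]

lemma sσ_lt {n k : ℕ} (h : n < k) (C : Ty) : sσ k C n = var n := by
  have h1 : ¬ (n = k) := by omega
  have h2 : ¬ (k < n) := by omega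
  simp [sσ, h1, h2]

lemma sσ_gt {n k : ℕ} (h : k < n) (C : Ty) : sσ k C n = var (n - 1) := by
  have h1 : ¬ (n = k) := by omega
  simp [sσ, h1, h]

/-- the renaming realizing `subst · k (var x)` -/
def srρ (k x : ℕ) : ℕ → ℕ := fun n => if n = k then x else if k < n then n - 1 else n

lemma subst_var_eq_ren (A : Ty) (k x : ℕ) : subst A k (var x) = ren (srρ k x) A := by
  rw [subst_eq_psub, ren_eq_psub]
  apply psub_ext
  intro n
  simp only [sσ, srρ]
  split_ifs <;> rfl

lemma tsize_subst_var (A : Ty) (k x : ℕ) : tsize (subst A k (var x)) = tsize A := by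
  rw [subst_var_eq_ren, tsize_ren]

lemma subst_lift0 (B : Ty) (C : Ty) : subst (lift 0 B) 0 C = B := by
  rw [lift0_eq_ren, subst_eq_psub, psub_ren]
  have : ∀ n : ℕ, sσ 0 C (Nat.succ n) = var n := by
    intro n
    rw [sσ_gt (by omega : 0 < Nat.succ n)]
    simp
  calc psub (fun n => sσ 0 C (Nat.succ n)) B = psub var B := psub_ext (fun n => by rw [this n]) B
    _ = B := psub_id B

lemma lift_subst_commute (B : Ty) (k : ℕ) (C : Ty) :
    subst (lift 0 B) (k + 1) (lift 0 C) = lift 0 (subst B k C) := by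
  rw [subst_eq_psub B k C, lift0_eq_ren (psub (sσ k C) B), ren_psub]
  rw [lift0_eq_ren B, subst_eq_psub, psub_ren]
  apply psub_ext
  intro n
  show sσ (k + 1) (lift 0 C) (Nat.succ n) = ren Nat.succ (sσ k C n)
  rcases Nat.lt_trichotomy n k with h | rfl | h
  · rw [sσ_lt (by omega : n + 1 < k + 1), sσ_lt h]
    rfl
  · show sσ (n+1) (lift 0 C) (n+1) = ren Nat.succ (sσ n C n)
    rw [sσ_self, sσ_self, lift0_eq_ren]
  · rw [sσ_gt (by omega : k + 1 < n + 1), sσ_gt h]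
    simp only [ren_var]
    congr 1
    omega

lemma subst_subst0 (A : Ty) (C₁ : Ty) (k : ℕ) (C : Ty) :
    subst (subst A 0 C₁) k C = subst (subst A (k + 1) (lift 0 C)) 0 (subst C₁ k C) := by
  rw [subst_eq_psub A 0 C₁, subst_eq_psub _ k C, subst_eq_psub A (k+1) (lift 0 C),
    subst_eq_psub _ 0 (subst C₁ k C), psub_psub, psub_psub]
  apply psub_ext
  intro n
  match n with
  | 0 =>
      rw [show sσ 0 C₁ 0 = C₁ from sσ_self 0 C₁,
        sσ_lt (by omega : 0 < k + 1), psub_var, sσ_self, subst_eq_psub]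
  | (n+1) =>
      rw [sσ_gt (by omega : 0 < n + 1)]
      have hn : n + 1 - 1 = n := by omega
      rw [hn, psub_var]
      rcases Nat.lt_trichotomy n k with h | rfl | h
      · rw [sσ_lt h, sσ_lt (by omega : n + 1 < k + 1), psub_var,
          sσ_gt (by omega : 0 < n + 1), hn]
      · rw [sσ_self, sσ_self, ← subst_eq_psub, subst_lift0]
      · rw [sσ_gt h, sσ_gt (by omega : k + 1 < n + 1), hn, psub_var,
          sσ_gt (by omega : 0 < n)]

lemma ren_subst0 (ρ : ℕ → ℕ) (A C : Ty) :
    ren ρ (subst A 0 C) = subst (ren (upr ρ) A) 0 (ren ρ C) := by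
  rw [subst_eq_psub, subst_eq_psub, ren_psub, psub_ren]
  apply psub_ext
  intro n
  match n with
  | 0 => rw [show sσ 0 C 0 = C from sσ_self 0 C, show upr ρ 0 = 0 from rfl,
      show sσ 0 (ren ρ C) 0 = ren ρ C from sσ_self 0 (ren ρ C)]
  | (n+1) =>
      rw [sσ_gt (by omega : 0 < n + 1), show upr ρ (n+1) = ρ n + 1 from rfl,
        sσ_gt (by omega : 0 < ρ n + 1)]
      simp

lemma mem0_fv_subst {A : Ty} {k : ℕ} {C : Ty} :
    0 ∈ fv (subst A (k + 1) (lift 0 C)) ↔ 0 ∈ fv A := by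
  rw [subst_eq_psub]
  rw [show (0 ∈ fv (psub (sσ (k+1) (lift 0 C)) A)) ↔ _ from fv_psub]
  constructor
  · rintro ⟨n, hn, h0⟩
    rcases Nat.lt_trichotomy n (k+1) with h | rfl | h
    · rw [sσ_lt h] at h0
      simp only [fv_var', Finset.mem_singleton] at h0
      obtain rfl : n = 0 := by omega
      exact hn
    · rw [sσ_self, lift0_eq_ren, fv_ren] at h0
      obtain ⟨j, _, hj⟩ := h0
      exact absurd hj (by omega)
    · rw [sσ_gt h] at h0
      simp only [fv_var', Finset.mem_singleton] at h0
      exact absurd h (by omega)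
  · intro h0
    refine ⟨0, h0, ?_⟩
    rw [sσ_lt (by omega : 0 < k + 1)]
    simp

lemma mem0_fv_ren_upr {A : Ty} {ρ : ℕ → ℕ} :
    0 ∈ fv (ren (upr ρ) A) ↔ 0 ∈ fv A := by
  rw [fv_ren]
  constructor
  · rintro ⟨n, hn, h0⟩
    cases n with
    | zero => exact hn
    | succ n => exact absurd h0 (by simp [upr])
  · intro h; exact ⟨0, h, rfl⟩

/-- types with no vacuous quantifier -/
inductive NoVac : Ty → Prop
  | var (n : ℕ) : NoVac (var n)
  | arr {A B : Ty} : NoVac A → NoVac B → NoVac (arr A B)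
  | all {A : Ty} : NoVac A → 0 ∈ fv A → NoVac (all A)

/-- strip vacuous quantifiers -/
def nf : Ty → Ty
  | var n => var n
  | arr A B => arr (nf A) (nf B)
  | all A => if 0 ∈ fv (nf A) then all (nf A) else ren Nat.pred (nf A)

lemma fv_nf (A : Ty) : fv (nf A) = fv A := by
  induction A with
  | var n => rfl
  | arr A B ihA ihB => simp [nf, ihA, ihB]
  | all A ih =>
      simp only [nf]
      split_ifs with h
      · ext m
        rw [mem_fv_all, mem_fv_all, ih]
      · ext m
        rw [mem_fv_all, fv_ren]
        constructor
        · rintro ⟨n, hn, rfl⟩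
          cases n with
          | zero => exact absurd hn h
          | succ n => rw [ih] at hn; simpa using hn
        · intro hm
          exact ⟨m + 1, by rwa [ih], rfl⟩

lemma nf_fix {A : Ty} (h : NoVac A) : nf A = A := by
  induction h with
  | var n => rfl
  | arr _ _ ihA ihB => simp [nf, ihA, ihB]
  | all _ h0 ih =>
      simp only [nf, ih]
      rw [if_pos h0]

lemma pos_neg_novac (A : Ty) : (PosTy A → NoVac A) ∧ (NegTy A → NoVac A) := by
  induction A with
  | var n => exact ⟨fun _ => .var n, fun _ => .var n⟩
  | arr B A ihB ihA =>
      constructor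
      · intro h
        cases h with
        | arr hB hA => exact .arr (ihB.2 hB) (ihA.1 hA)
      · intro h
        cases h with
        | arr hB hA => exact .arr (ihB.1 hB) (ihA.2 hA)
  | all A ih =>
      constructor
      · intro h
        cases h with
        | all hA h0 => exact .all (ih.1 hA) h0
      · intro h
        cases h

lemma pos_neg_ren (A : Ty) : ∀ ρ, (PosTy A → PosTy (ren ρ A)) ∧ (NegTy A → NegTy (ren ρ A)) := by
  induction A with
  | var n => exact fun ρ => ⟨fun _ => .var _, fun _ => .var _⟩
  | arr B A ihB ihA =>
      intro ρ
      constructor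
      · intro h
        cases h with
        | arr hB hA => exact .arr ((ihB ρ).2 hB) ((ihA ρ).1 hA)
      · intro h
        cases h with
        | arr hB hA => exact .arr ((ihB ρ).1 hB) ((ihA ρ).2 hA)
  | all A ih =>
      intro ρ
      constructor
      · intro h
        cases h with
        | all hA h0 => exact .all ((ih (upr ρ)).1 hA) (mem0_fv_ren_upr.2 h0)
      · intro h
        cases h

lemma posTy_subst_var {A : Ty} (h : PosTy A) (k x : ℕ) : PosTy (subst A k (var x)) := by
  rw [subst_var_eq_ren]
  exact (pos_neg_ren A _).1 h

lemma negTy_lift {A : Ty} (h : NegTy A) (d : ℕ) : NegTy (lift d A) := by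
  rw [lift_eq_ren]
  exact (pos_neg_ren A _).2 h

lemma nf_ren (ρ : ℕ → ℕ) (A : Ty) : nf (ren ρ A) = ren ρ (nf A) := by
  induction A generalizing ρ with
  | var n => rfl
  | arr A B ihA ihB => simp [nf, ihA, ihB]
  | all A ih =>
      show nf (all (ren (upr ρ) A)) = ren ρ (nf (all A))
      simp only [nf, ih]
      by_cases h : 0 ∈ fv (nf A)
      · rw [if_pos (mem0_fv_ren_upr.2 h), if_pos h]
        rfl
      · rw [if_neg (fun hh => h (mem0_fv_ren_upr.1 hh)), if_neg h]
        rw [ren_ren, ren_ren]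
        apply ren_congr
        intro n hn
        have hn0 : n ≠ 0 := fun h0 => h (h0 ▸ hn)
        obtain ⟨m, rfl⟩ := Nat.exists_eq_succ_of_ne_zero hn0
        rfl

lemma nf_lift0 (C : Ty) : nf (lift 0 C) = lift 0 (nf C) := by
  rw [lift0_eq_ren, lift0_eq_ren, nf_ren]

lemma pred_subst_commute {T : Ty} (h : 0 ∉ fv T) (k : ℕ) (D : Ty) :
    ren Nat.pred (subst T (k + 1) (lift 0 D)) = subst (ren Nat.pred T) k D := by
  rw [subst_eq_psub, subst_eq_psub, ren_psub, ren_eq_psub Nat.pred T, psub_psub]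
  apply psub_congr
  intro n hn
  have hn0 : n ≠ 0 := fun h0 => h (h0 ▸ hn)
  obtain ⟨m, rfl⟩ := Nat.exists_eq_succ_of_ne_zero hn0
  show ren Nat.pred (sσ (k + 1) (lift 0 D) (m + 1)) = psub (sσ k D) (var (Nat.pred (m + 1)))
  rcases Nat.lt_trichotomy m k with hmk | rfl | hmk
  · rw [sσ_lt (by omega : m + 1 < k + 1), psub_var]
    show var (Nat.pred (m+1)) = sσ k D (Nat.pred (m+1))
    rw [show Nat.pred (m+1) = m from rfl, sσ_lt hmk]
  · rw [sσ_self, psub_var]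
    show ren Nat.pred (lift 0 D) = sσ m D (Nat.pred (m+1))
    rw [show Nat.pred (m+1) = m from rfl, sσ_self, lift0_eq_ren, ren_ren]
    exact ren_id (fun n _ => rfl)
  · rw [sσ_gt (by omega : k + 1 < m + 1), psub_var, ren_var]
    show var (Nat.pred (m + 1 - 1)) = sσ k D (Nat.pred (m+1))
    rw [show Nat.pred (m+1) = m from rfl, sσ_gt hmk]
    congr 1

lemma nf_subst (A : Ty) (k : ℕ) (C : Ty) : nf (subst A k C) = subst (nf A) k (nf C) := by
  induction A generalizing k C with
  | var n =>
      rcases Nat.lt_trichotomy n k with h | rfl | h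
      · rw [show subst (var n) k C = var n from by rw [subst_eq_psub, psub_var, sσ_lt h]]
        rw [show nf (var n) = var n from rfl,
          show subst (var n) k (nf C) = var n from by rw [subst_eq_psub, psub_var, sσ_lt h]]
      · rw [show subst (var n) n C = C from by rw [subst_eq_psub, psub_var, sσ_self],
          show nf (var n) = var n from rfl,
          show subst (var n) n (nf C) = nf C from by rw [subst_eq_psub, psub_var, sσ_self]]
      · rw [show subst (var n) k C = var (n-1) from by rw [subst_eq_psub, psub_var, sσ_gt h],
          show nf (var n) = var n from rfl,
          show subst (var n) k (nf C) = var (n-1) from by rw [subst_eq_psub, psub_var, sσ_gt h]]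
        rfl
  | arr A B ihA ihB => simp [subst, nf, ihA, ihB]
  | all A ih =>
      show nf (all (subst A (k+1) (lift 0 C))) = subst (nf (all A)) k (nf C)
      simp only [nf, ih, nf_lift0]
      by_cases h : 0 ∈ fv (nf A)
      · rw [if_pos (mem0_fv_subst.2 h), if_pos h]
        rfl
      · rw [if_neg (fun hh => h (mem0_fv_subst.1 hh)), if_neg h]
        exact pred_subst_commute h k (nf C)

end Ty
/-! ### σ-calculus for `Lam` -/

namespace Lam

@[simp] lemma fv_varL (n : ℕ) : fv (var n) = {n} := rfl
@[simp] lemma fv_appL (A B : Lam) : fv (app A B) = fv A ∪ fv B := rfl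

lemma mem_fv_lam {m : ℕ} {A : Lam} : m ∈ fv (lam A) ↔ m + 1 ∈ fv A := by
  show m ∈ ((fv A).erase 0).image (· - 1) ↔ _
  simp only [Finset.mem_image, Finset.mem_erase]
  constructor
  · rintro ⟨j, ⟨hj0, hj⟩, rfl⟩
    have hje : j - 1 + 1 = j := by omega
    rwa [hje]
  · intro h; exact ⟨m + 1, ⟨Nat.succ_ne_zero m, h⟩, rfl⟩

/-- lifting a renaming under a binder -/
def upr (ρ : ℕ → ℕ) : ℕ → ℕ
  | 0 => 0
  | n + 1 => ρ n + 1

/-- renaming of type variables -/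
def ren (ρ : ℕ → ℕ) : Lam → Lam
  | var n => var (ρ n)
  | app A B => app (ren ρ A) (ren ρ B)
  | lam A => lam (ren (upr ρ) A)

@[simp] lemma ren_var (ρ : ℕ → ℕ) (n : ℕ) : ren ρ (var n) = var (ρ n) := rfl
@[simp] lemma ren_app (ρ : ℕ → ℕ) (A B : Lam) :
    ren ρ (app A B) = app (ren ρ A) (ren ρ B) := rfl
@[simp] lemma ren_lam (ρ : ℕ → ℕ) (A : Lam) : ren ρ (lam A) = lam (ren (upr ρ) A) := rfl

lemma ren_congr {ρ ρ' : ℕ → ℕ} {A : Lam} (h : ∀ n ∈ fv A, ρ n = ρ' n) :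
    ren ρ A = ren ρ' A := by
  induction A generalizing ρ ρ' with
  | var n => simp [h n (by simp)]
  | app A B ihA ihB =>
      simp only [ren_app]
      rw [ihA (fun n hn => h n (by simp [hn])), ihB (fun n hn => h n (by simp [hn]))]
  | lam A ih =>
      simp only [ren_lam]
      rw [ih (fun n hn => ?_)]
      cases n with
      | zero => rfl
      | succ n => show ρ n + 1 = ρ' n + 1; rw [h n (mem_fv_lam.2 hn)]

lemma fv_ren {m : ℕ} {ρ : ℕ → ℕ} {A : Lam} :
    m ∈ fv (ren ρ A) ↔ ∃ n ∈ fv A, ρ n = m := by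
  induction A generalizing m ρ with
  | var n => simp [eq_comm]
  | app A B ihA ihB => simp [ihA, ihB, or_and_right, exists_or]
  | lam A ih =>
      rw [ren_lam, mem_fv_lam, ih]
      constructor
      · rintro ⟨n, hn, hup⟩
        cases n with
        | zero => exact absurd hup (by simp [upr])
        | succ n =>
            refine ⟨n, mem_fv_lam.2 hn, ?_⟩
            have : ρ n + 1 = m + 1 := hup
            omega
      · rintro ⟨n, hn, rfl⟩
        exact ⟨n + 1, mem_fv_lam.1 hn, rfl⟩

lemma ren_ren (ρ ρ' : ℕ → ℕ) (A : Lam) :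
    ren ρ (ren ρ' A) = ren (fun n => ρ (ρ' n)) A := by
  induction A generalizing ρ ρ' with
  | var n => rfl
  | app A B ihA ihB => simp [ihA, ihB]
  | lam A ih =>
      simp only [ren_lam, ih]
      rw [ren_congr (fun n _ => ?_)]
      cases n with
      | zero => rfl
      | succ n => rfl

lemma ren_id {ρ : ℕ → ℕ} {A : Lam} (h : ∀ n ∈ fv A, ρ n = n) : ren ρ A = A := by
  induction A generalizing ρ with
  | var n => simp [h n (by simp)]
  | app A B ihA ihB =>
      simp only [ren_app]
      rw [ihA (fun n hn => h n (by simp [hn])), ihB (fun n hn => h n (by simp [hn]))]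
  | lam A ih =>
      simp only [ren_lam]
      rw [ih (fun n hn => ?_)]
      cases n with
      | zero => rfl
      | succ n => show ρ n + 1 = n + 1; rw [h n (mem_fv_lam.2 hn)]

lemma lift_eq_ren (d : ℕ) (A : Lam) :
    lift d A = ren (fun n => if n < d then n else n + 1) A := by
  induction A generalizing d with
  | var n => simp [lift, apply_ite var]
  | app A B ihA ihB => simp [lift, ihA, ihB]
  | lam A ih =>
      simp only [lift, ih, ren_lam]
      congr 1
      apply ren_congr (fun n _ => ?_)
      cases n with
      | zero => simp [upr]
      | succ n =>
          show (if n + 1 < d + 1 then n + 1 else n + 2) = (if n < d then n else n + 1) + 1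
          by_cases h : n < d <;> simp [h, Nat.succ_lt_succ_iff]

lemma lift0_eq_ren (A : Lam) : lift 0 A = ren Nat.succ A := by
  rw [lift_eq_ren]; exact ren_congr (fun n _ => by simp)

/-- substitution cons -/
def scons (C : Lam) (σ : ℕ → Lam) : ℕ → Lam
  | 0 => C
  | n + 1 => σ n

def ups (σ : ℕ → Lam) : ℕ → Lam := scons (var 0) (fun n => ren Nat.succ (σ n))

/-- parlamel substitution -/
def psub (σ : ℕ → Lam) : Lam → Lam
  | var n => σ n
  | app A B => app (psub σ A) (psub σ B)
  | lam A => lam (psub (ups σ) A)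

@[simp] lemma psub_var (σ : ℕ → Lam) (n : ℕ) : psub σ (var n) = σ n := rfl
@[simp] lemma psub_app (σ : ℕ → Lam) (A B : Lam) :
    psub σ (app A B) = app (psub σ A) (psub σ B) := rfl
@[simp] lemma psub_lam (σ : ℕ → Lam) (A : Lam) : psub σ (lam A) = lam (psub (ups σ) A) := rfl

lemma psub_ext {σ σ' : ℕ → Lam} (h : ∀ n, σ n = σ' n) (A : Lam) : psub σ A = psub σ' A := by
  have : σ = σ' := funext h
  rw [this]

lemma psub_congr {σ σ' : ℕ → Lam} {A : Lam} (h : ∀ n ∈ fv A, σ n = σ' n) :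
    psub σ A = psub σ' A := by
  induction A generalizing σ σ' with
  | var n => simp [h n (by simp)]
  | app A B ihA ihB =>
      simp only [psub_app]
      rw [ihA (fun n hn => h n (by simp [hn])), ihB (fun n hn => h n (by simp [hn]))]
  | lam A ih =>
      simp only [psub_lam]
      rw [ih (fun n hn => ?_)]
      cases n with
      | zero => rfl
      | succ n => show ren _ _ = ren _ _ ; rw [h n (mem_fv_lam.2 hn)]

lemma ren_eq_psub (ρ : ℕ → ℕ) (A : Lam) : ren ρ A = psub (fun n => var (ρ n)) A := by
  induction A generalizing ρ with
  | var n => rfl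
  | app A B ihA ihB => simp [ihA, ihB]
  | lam A ih =>
      simp only [ren_lam, psub_lam, ih]
      congr 1
      apply psub_congr (fun n _ => ?_)
      cases n with
      | zero => rfl
      | succ n => rfl

lemma psub_ren (σ : ℕ → Lam) (ρ : ℕ → ℕ) (A : Lam) :
    psub σ (ren ρ A) = psub (fun n => σ (ρ n)) A := by
  induction A generalizing σ ρ with
  | var n => rfl
  | app A B ihA ihB => simp [ihA, ihB]
  | lam A ih =>
      simp only [ren_lam, psub_lam, ih]
      congr 1
      apply psub_congr (fun n _ => ?_)
      cases n with
      | zero => rfl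
      | succ n => rfl

lemma ren_psub (ρ : ℕ → ℕ) (σ : ℕ → Lam) (A : Lam) :
    ren ρ (psub σ A) = psub (fun n => ren ρ (σ n)) A := by
  induction A generalizing σ ρ with
  | var n => rfl
  | app A B ihA ihB => simp [ihA, ihB]
  | lam A ih =>
      simp only [psub_lam, ren_lam, ih]
      congr 1
      apply psub_congr (fun n _ => ?_)
      cases n with
      | zero => rfl
      | succ n =>
          show ren (upr ρ) (ren Nat.succ (σ n)) = ren Nat.succ (ren ρ (σ n))
          rw [ren_ren, ren_ren]
          exact ren_congr (fun m _ => rfl)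

lemma psub_psub (σ' σ : ℕ → Lam) (A : Lam) :
    psub σ' (psub σ A) = psub (fun n => psub σ' (σ n)) A := by
  induction A generalizing σ σ' with
  | var n => rfl
  | app A B ihA ihB => simp [ihA, ihB]
  | lam A ih =>
      simp only [psub_lam, ih]
      apply congrArg
      apply psub_congr (fun n _ => ?_)
      cases n with
      | zero => rfl
      | succ n =>
          show psub (ups σ') (ren Nat.succ (σ n)) = ren Nat.succ (psub σ' (σ n))
          rw [psub_ren, ren_psub]
          exact psub_congr (fun m _ => rfl)

lemma psub_id (A : Lam) : psub var A = A := by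
  induction A with
  | var n => rfl
  | app A B ihA ihB => simp [ihA, ihB]
  | lam A ih =>
      simp only [psub_lam]
      rw [psub_ext (fun n => ?_) A, ih]
      cases n with
      | zero => rfl
      | succ n => rfl

/-- the substitution realizing `subst · k C` -/
def sσ (k : ℕ) (C : Lam) : ℕ → Lam := fun n => if n = k then C else if k < n then var (n - 1) else var n

lemma subst_eq_psub (A : Lam) (k : ℕ) (C : Lam) : subst A k C = psub (sσ k C) A := by
  induction A generalizing k C with
  | var n => rfl
  | app A B ihA ihB => simp [subst, ihA, ihB]
  | lam A ih =>
      simp only [subst, psub_lam, ih]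
      congr 1
      apply psub_congr (fun n _ => ?_)
      cases n with
      | zero => simp [sσ, ups, scons]
      | succ n =>
          show sσ (k+1) (lift 0 C) (n+1) = ren Nat.succ (sσ k C n)
          simp only [sσ, ups, scons]
          rcases Nat.lt_trichotomy n k with h | rfl | h
          · have h1 : ¬ (n + 1 = k + 1) := by omega
            have h2 : ¬ (k + 1 < n + 1) := by omega
            have h3 : ¬ (n = k) := by omega
            have h4 : ¬ (k < n) := by omega
            simp [h1, h2, h3, h4]
          · simp [lift0_eq_ren]
          · have h1 : ¬ (n + 1 = k + 1) := by omega
            have h2 : (k + 1 < n + 1) := by omega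
            have h3 : ¬ (n = k) := by omega
            have h5 : n + 1 - 1 = n - 1 + 1 := by omega
            simp [h1, h2, h3, h, h5]

lemma fv_psub {m : ℕ} {σ : ℕ → Lam} {A : Lam} :
    m ∈ fv (psub σ A) ↔ ∃ n ∈ fv A, m ∈ fv (σ n) := by
  induction A generalizing m σ with
  | var n => simp
  | app A B ihA ihB => simp [ihA, ihB, or_and_right, exists_or]
  | lam A ih =>
      rw [psub_lam, mem_fv_lam, ih]
      constructor
      · rintro ⟨n, hn, hm⟩
        cases n with
        | zero =>
            have : m + 1 ∈ fv (var 0) := hm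
            simp at this
        | succ n =>
            refine ⟨n, mem_fv_lam.2 hn, ?_⟩
            have : m + 1 ∈ fv (ren Nat.succ (σ n)) := hm
            rw [fv_ren] at this
            obtain ⟨j, hj, hjm⟩ := this
            have : j = m := by omega
            rwa [this] at hj
      · rintro ⟨n, hn, hm⟩
        refine ⟨n + 1, mem_fv_lam.1 hn, ?_⟩
        show m + 1 ∈ fv (ren Nat.succ (σ n))
        rw [fv_ren]
        exact ⟨m, hm, rfl⟩


end Lam
/-! ### β-reduction vs renaming, free variables -/

namespace Lam

@[simp] lemma sσ_self (k : ℕ) (C : Lam) : sσ k C k = C := by simp [sσ]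

lemma sσ_lt {n k : ℕ} (h : n < k) (C : Lam) : sσ k C n = var n := by
  have h1 : ¬ (n = k) := by omega
  have h2 : ¬ (k < n) := by omega
  simp [sσ, h1, h2]

lemma sσ_gt {n k : ℕ} (h : k < n) (C : Lam) : sσ k C n = var (n - 1) := by
  have h1 : ¬ (n = k) := by omega
  simp [sσ, h1, h]

lemma ren_subst0 (ρ : ℕ → ℕ) (A C : Lam) :
    ren ρ (subst A 0 C) = subst (ren (upr ρ) A) 0 (ren ρ C) := by
  rw [subst_eq_psub, subst_eq_psub, ren_psub, psub_ren]
  apply psub_ext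
  intro n
  match n with
  | 0 => rw [show sσ 0 C 0 = C from sσ_self 0 C, show upr ρ 0 = 0 from rfl,
      show sσ 0 (ren ρ C) 0 = ren ρ C from sσ_self 0 (ren ρ C)]
  | (n+1) =>
      rw [sσ_gt (by omega : 0 < n + 1), show upr ρ (n+1) = ρ n + 1 from rfl,
        sσ_gt (by omega : 0 < ρ n + 1)]
      simp

lemma beta_ren {t t' : Lam} (h : Beta t t') (ρ : ℕ → ℕ) : Beta (ren ρ t) (ren ρ t') := by
  induction h generalizing ρ with
  | beta t u =>
      rw [ren_subst0]
      exact Beta.beta _ _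
  | appL u _ ih => exact Beta.appL _ (ih ρ)
  | appR t _ ih => exact Beta.appR _ (ih ρ)
  | lam _ ih => exact Beta.lam (ih (upr ρ))

lemma betaStar_ren {t t' : Lam} (h : BetaStar t t') (ρ : ℕ → ℕ) :
    BetaStar (ren ρ t) (ren ρ t') := by
  induction h with
  | refl => exact Relation.ReflTransGen.refl
  | tail _ h2 ih => exact ih.tail (beta_ren h2 ρ)

lemma fv_subst_subset {s u : Lam} {m : ℕ} (h : m ∈ fv (subst s 0 u)) :
    m + 1 ∈ fv s ∨ m ∈ fv u := by
  rw [subst_eq_psub] at h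
  rw [show (m ∈ fv (psub (sσ 0 u) s)) ↔ _ from fv_psub] at h
  obtain ⟨n, hn, hm⟩ := h
  cases n with
  | zero =>
      right
      simpa [sσ] using hm
  | succ n =>
      left
      rw [sσ_gt (by omega : 0 < n + 1)] at hm
      simp only [fv_varL, Finset.mem_singleton] at hm
      have : n + 1 - 1 = n := by omega
      rw [this] at hm
      subst hm
      exact hn

lemma fv_beta {t t' : Lam} (h : Beta t t') : fv t' ⊆ fv t := by
  induction h with
  | beta s u =>
      intro m hm
      rcases fv_subst_subset hm with h1 | h1
      · simp only [fv_appL, Finset.mem_union]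
        left
        exact mem_fv_lam.2 h1
      · simp only [fv_appL, Finset.mem_union]
        right
        exact h1
  | appL u _ ih =>
      intro m hm
      simp only [fv_appL, Finset.mem_union] at hm ⊢
      rcases hm with h1 | h1
      · exact Or.inl (ih h1)
      · exact Or.inr h1
  | appR t _ ih =>
      intro m hm
      simp only [fv_appL, Finset.mem_union] at hm ⊢
      rcases hm with h1 | h1
      · exact Or.inl h1
      · exact Or.inr (ih h1)
  | lam _ ih =>
      intro m hm
      rw [mem_fv_lam] at hm ⊢
      exact ih hm

lemma fv_betaStar {t t' : Lam} (h : BetaStar t t') : fv t' ⊆ fv t := by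
  induction h with
  | refl => exact fun _ h => h
  | tail _ h2 ih => exact fun m hm => ih (fv_beta h2 hm)

lemma beta_var {x : ℕ} {u : Lam} (h : Beta (var x) u) : False := by cases h

/-- classification of the β-reducts of `(τ)x` -/
lemma app_var_reducts {τ v : Lam} {x : ℕ} (hred : BetaStar (app τ (var x)) v) :
    (∃ τ₁, v = app τ₁ (var x) ∧ BetaStar τ τ₁) ∨
    (∃ t, BetaStar τ (lam t) ∧ BetaStar (subst t 0 (var x)) v) := by
  induction hred with
  | refl => exact Or.inl ⟨τ, rfl, Relation.ReflTransGen.refl⟩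
  | tail h1 h2 ih =>
      rcases ih with ⟨τ₁, rfl, hτ⟩ | ⟨t, ht, hs⟩
      · cases h2 with
        | beta t u => exact Or.inr ⟨t, hτ, Relation.ReflTransGen.refl⟩
        | appL u h => exact Or.inl ⟨_, rfl, hτ.tail h⟩
        | appR t h => exact absurd h beta_var
      · exact Or.inr ⟨t, ht, hs.tail h2⟩

/-- the renaming realizing `subst · 0 (var x)` -/
def ρv (x : ℕ) : ℕ → ℕ
  | 0 => x
  | n + 1 => n

/-- inverse of `ρv` -/
def ψv (x : ℕ) : ℕ → ℕ := fun n => if n = x then 0 else n + 1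

lemma subst_var0_eq_ren (t : Lam) (x : ℕ) : subst t 0 (var x) = ren (ρv x) t := by
  rw [subst_eq_psub, ren_eq_psub]
  apply psub_ext
  intro n
  cases n with
  | zero => simp [sσ, ρv]
  | succ n =>
      rw [sσ_gt (by omega : 0 < n + 1)]
      show var (n + 1 - 1) = var (ρv x (n+1))
      have : n + 1 - 1 = n := by omega
      rw [this]
      rfl

lemma ren_psi_rho (x : ℕ) (v : Lam) : ren (ρv x) (ren (ψv x) v) = v := by
  rw [ren_ren]
  apply ren_id
  intro n _
  by_cases h : n = x
  · subst h; simp [ψv, ρv]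
  · simp [ψv, ρv, h]

lemma ren_rho_psi {t : Lam} {x : ℕ} (h : x + 1 ∉ fv t) : ren (ψv x) (ren (ρv x) t) = t := by
  rw [ren_ren]
  apply ren_id
  intro n hn
  cases n with
  | zero => simp [ψv, ρv]
  | succ n =>
      have hnx : n ≠ x := fun he => h (he ▸ hn)
      simp [ψv, ρv, hnx]

lemma psi_not_fv (x : ℕ) (v : Lam) : x + 1 ∉ fv (ren (ψv x) v) := by
  rw [fv_ren]
  rintro ⟨n, _, hn⟩
  by_cases h : n = x
  · subst h; simp [ψv] at hn
  · exact absurd hn (by simp [ψv, h])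

lemma beta_reflect {t v : Lam} {x : ℕ} (hfv : x + 1 ∉ fv t)
    (h : Beta (ren (ρv x) t) v) :
    Beta t (ren (ψv x) v) ∧ v = ren (ρv x) (ren (ψv x) v) := by
  have h1 := beta_ren h (ψv x)
  rw [ren_rho_psi hfv] at h1
  exact ⟨h1, (ren_psi_rho x v).symm⟩

lemma betaStar_reflect {t v : Lam} {x : ℕ} (hfv : x + 1 ∉ fv t)
    (h : BetaStar (ren (ρv x) t) v) :
    ∃ t₁, BetaStar t t₁ ∧ v = ren (ρv x) t₁ ∧ x + 1 ∉ fv t₁ := by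
  induction h with
  | refl => exact ⟨t, Relation.ReflTransGen.refl, rfl, hfv⟩
  | tail h1 h2 ih =>
      obtain ⟨t₁, hstar, rfl, hfv₁⟩ := ih
      obtain ⟨hb, he⟩ := beta_reflect hfv₁ h2
      exact ⟨ren (ψv x) _, hstar.tail hb, he, psi_not_fv x _⟩

/-- `subst (psub (ups σ) t) 0 v = psub (scons v σ) t` : key for adequacy. -/
lemma subst_psub_ups (t v : Lam) (σ : ℕ → Lam) :
    subst (psub (ups σ) t) 0 v = psub (scons v σ) t := by
  rw [subst_eq_psub, psub_psub]
  apply psub_ext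
  intro n
  cases n with
  | zero => simp [ups, scons, sσ]
  | succ n =>
      show psub (sσ 0 v) (ren Nat.succ (σ n)) = σ n
      rw [psub_ren]
      calc psub (fun m => sσ 0 v (Nat.succ m)) (σ n) = psub var (σ n) := by
            apply psub_ext
            intro m
            rw [sσ_gt (by omega : 0 < Nat.succ m)]
            simp
        _ = σ n := psub_id _

end Lam
/-! ### Weak head reduction, spines, and the normalization predicate -/

namespace Lam

lemma whr_beta {t u : Lam} (h : Whr t u) : Beta t u := by
  induction h with
  | head t u => exact Beta.beta t u
  | appL u _ ih => exact Beta.appL u ih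

lemma whrStar_betaStar {t u : Lam} (h : WhrStar t u) : BetaStar t u := by
  induction h with
  | refl => exact Relation.ReflTransGen.refl
  | tail _ h2 ih => exact ih.tail (whr_beta h2)

lemma whrStar_appL {t u : Lam} (s : Lam) (h : WhrStar t u) :
    WhrStar (app t s) (app u s) := by
  induction h with
  | refl => exact Relation.ReflTransGen.refl
  | tail _ h2 ih => exact ih.tail (Whr.appL s h2)

@[simp] lemma appList_nil (t : Lam) : appList t [] = t := rfl
@[simp] lemma appList_cons (t a : Lam) (l : List Lam) :
    appList t (a :: l) = appList (app t a) l := rfl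

lemma appList_snoc (t : Lam) (l : List Lam) (a : Lam) :
    appList t (l ++ [a]) = app (appList t l) a := by
  simp [appList]

lemma appList_app_inv {h : Lam} {l : List Lam} {a b : Lam}
    (he : appList h l = app a b) :
    (l = [] ∧ h = app a b) ∨ ∃ l', l = l' ++ [b] ∧ a = appList h l' := by
  induction l generalizing h with
  | nil => exact Or.inl ⟨rfl, he⟩
  | cons c l ih =>
      rcases ih he with ⟨rfl, h2⟩ | ⟨l', rfl, rfl⟩
      · cases h2
        exact Or.inr ⟨[], rfl, rfl⟩
      · exact Or.inr ⟨c :: l', rfl, rfl⟩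

/-- variable-headed terms -/
inductive Spine : Lam → Prop
  | var (y : ℕ) : Spine (var y)
  | app {t : Lam} (u : Lam) : Spine t → Spine (app t u)

lemma spine_appList {t : Lam} (h : Spine t) (l : List Lam) : Spine (appList t l) := by
  induction l generalizing t with
  | nil => exact h
  | cons c l ih => exact ih (h.app c)

/-- weak head normal forms -/
def Hnf (v : Lam) : Prop := (∃ s, v = lam s) ∨ Spine v

/-- weak-head normalizing terms -/
def Nset : Set Lam := {t | ∃ v, WhrStar t v ∧ Hnf v}

/-- variable-headed terms as a set -/
def N0set : Set Lam := {t | Spine t}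

lemma Nset_sat : Saturated Nset := by
  rintro t u h ⟨v, hv, hnf⟩
  exact ⟨v, h.trans hv, hnf⟩

lemma N0_sub_N : N0set ⊆ Nset := fun t ht => ⟨t, Relation.ReflTransGen.refl, Or.inr ht⟩

lemma app_mem_N_aux {a v : Lam} (hstar : WhrStar a v) (hnf : Hnf v) :
    ∀ u t, a = app u t → u ∈ Nset := by
  induction hstar using Relation.ReflTransGen.head_induction_on with
  | refl =>
      intro u t he
      subst he
      rcases hnf with ⟨s, hs⟩ | hsp
      · exact absurd hs (by intro h; cases h)
      · cases hsp with
        | app _ h => exact N0_sub_N h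
  | head hw hstar ih =>
      intro u t he
      subst he
      cases hw with
      | head s u' => exact ⟨lam s, Relation.ReflTransGen.refl, Or.inl ⟨s, rfl⟩⟩
      | appL u' hw' =>
          have := ih _ _ rfl
          exact Nset_sat _ _ (Relation.ReflTransGen.single hw') this

lemma app_mem_N {u t : Lam} (h : app u t ∈ Nset) : u ∈ Nset := by
  obtain ⟨v, hstar, hnf⟩ := h
  exact app_mem_N_aux hstar hnf u t rfl

end Lam

/-- admissibility class for weak head normalization -/
def CC (G : Set Lam) : Prop := Saturated G ∧ Lam.N0set ⊆ G ∧ G ⊆ Lam.Nset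

lemma CC_N : CC Lam.Nset := ⟨Lam.Nset_sat, Lam.N0_sub_N, fun _ h => h⟩

lemma CC_stable {A : Ty} {I : Interp} (hI : ∀ n, CC (I n)) : CC (interpC CC A I) := by
  induction A generalizing I with
  | var n => exact hI n
  | arr A B ihA ihB =>
      refine ⟨?_, ?_, ?_⟩
      · intro t u h hu s hs
        exact (ihB hI).1 (Lam.app t s) (Lam.app u s) (Lam.whrStar_appL s h) (hu s hs)
      · intro t ht s hs
        exact (ihB hI).2.1 (Lam.Spine.app s ht)
      · intro u hu
        have h0 : Lam.var 0 ∈ interpC CC A I := (ihA hI).2.1 (Lam.Spine.var 0)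
        exact Lam.app_mem_N ((ihB hI).2.2 (hu (Lam.var 0) h0))
  | all A ih =>
      have hcons : ∀ G, CC G → ∀ n, CC (Interp.cons G I n) := by
        intro G hG n
        cases n with
        | zero => exact hG
        | succ n => exact hI n
      refine ⟨?_, ?_, ?_⟩
      · intro t u h hu
        simp only [interpC, Set.mem_iInter] at hu ⊢
        intro G hG
        exact (ih (hcons G hG)).1 t u h (hu G hG)
      · intro t ht
        simp only [interpC, Set.mem_iInter]
        intro G hG
        exact (ih (hcons G hG)).2.1 ht
      · intro t ht
        simp only [interpC, Set.mem_iInter] at ht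
        exact (ih (hcons Lam.Nset CC_N)).2.2 (ht Lam.Nset CC_N)

/-- interpretation is functorial for type-variable renamings (any class `C`) -/
lemma interpC_ren (C : Set Lam → Prop) (A : Ty) (ρ : ℕ → ℕ) (I : Interp) :
    interpC C (Ty.ren ρ A) I = interpC C A (fun n => I (ρ n)) := by
  induction A generalizing ρ I with
  | var n => rfl
  | arr A B ihA ihB => show arrowSet _ _ = arrowSet _ _; rw [ihA, ihB]
  | all A ih =>
      show (⋂ (G : Set Lam) (_ : C G), interpC C (Ty.ren (Ty.upr ρ) A) (Interp.cons G I)) = _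
      apply Set.iInter_congr
      intro G
      apply Set.iInter_congr
      intro _
      rw [ih]
      have : (fun n => Interp.cons G I (Ty.upr ρ n)) = Interp.cons G (fun n => I (ρ n)) := by
        funext n
        cases n with
        | zero => rfl
        | succ n => rfl
      rw [this]

def insertI (k : ℕ) (G : Set Lam) (I : Interp) : Interp :=
  fun n => if n < k then I n else if n = k then G else I (n - 1)

lemma insertI_cons (k : ℕ) (G X : Set Lam) (I : Interp) :
    insertI (k + 1) X (Interp.cons G I) = Interp.cons G (insertI k X I) := by
  funext n
  cases n with
  | zero => simp [insertI, Interp.cons]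
  | succ n =>
      show insertI (k+1) X (Interp.cons G I) (n+1) = insertI k X I n
      simp only [insertI]
      rcases Nat.lt_trichotomy n k with h | rfl | h
      · rw [if_pos (by omega : n + 1 < k + 1), if_pos h]
        rfl
      · rw [if_neg (by omega : ¬ (n + 1 < n + 1)), if_pos rfl,
          if_neg (by omega : ¬ (n < n)), if_pos rfl]
      · rw [if_neg (by omega : ¬ (n + 1 < k + 1)), if_neg (by omega : ¬ (n + 1 = k + 1)),
          if_neg (by omega : ¬ (n < k)), if_neg (by omega : ¬ (n = k))]
        show Interp.cons G I (n + 1 - 1) = I (n - 1)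
        have h1 : n + 1 - 1 = (n - 1) + 1 := by omega
        rw [h1]
        rfl

lemma interpC_subst (C : Set Lam → Prop) (A : Ty) :
    ∀ (k : ℕ) (C₀ : Ty) (I : Interp),
      interpC C (Ty.subst A k C₀) I = interpC C A (insertI k (interpC C C₀ I) I) := by
  induction A with
  | var n =>
      intro k C₀ I
      rcases Nat.lt_trichotomy n k with h | rfl | h
      · rw [show Ty.subst (Ty.var n) k C₀ = Ty.var n from by
          rw [Ty.subst_eq_psub, Ty.psub_var, Ty.sσ_lt h]]
        show I n = insertI k (interpC C C₀ I) I n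
        simp [insertI, h]
      · rw [show Ty.subst (Ty.var n) n C₀ = C₀ from by
          rw [Ty.subst_eq_psub, Ty.psub_var, Ty.sσ_self]]
        show interpC C C₀ I = insertI n (interpC C C₀ I) I n
        simp [insertI]
      · rw [show Ty.subst (Ty.var n) k C₀ = Ty.var (n - 1) from by
          rw [Ty.subst_eq_psub, Ty.psub_var, Ty.sσ_gt h]]
        show I (n - 1) = insertI k (interpC C C₀ I) I n
        rw [insertI, if_neg (by omega : ¬ (n < k)), if_neg (by omega : ¬ (n = k))]
  | arr A B ihA ihB =>
      intro k C₀ I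
      show arrowSet _ _ = arrowSet _ _
      rw [ihA, ihB]
  | all A ih =>
      intro k C₀ I
      show (⋂ (G : Set Lam) (_ : C G), interpC C (Ty.subst A (k+1) (Ty.lift 0 C₀)) (Interp.cons G I)) = _
      apply Set.iInter_congr
      intro G
      apply Set.iInter_congr
      intro _
      rw [ih (k+1) (Ty.lift 0 C₀) (Interp.cons G I)]
      have hlift : interpC C (Ty.lift 0 C₀) (Interp.cons G I) = interpC C C₀ I := by
        rw [Ty.lift0_eq_ren, interpC_ren]
        have : (fun n => Interp.cons G I (Nat.succ n)) = I := by funext n; rfl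
        rw [this]
      rw [hlift, insertI_cons]

/-- Adequacy of the interpretation for `CC`. -/
theorem adequacy {Γ : Ctx} {t : Lam} {A : Ty} (h : TyJ Γ t A) :
    ∀ I : Interp, (∀ n, CC (I n)) → ∀ σ : ℕ → Lam,
      (∀ x B, Γ x = some B → σ x ∈ interpC CC B I) →
      Lam.psub σ t ∈ interpC CC A I := by
  induction h with
  | var hx =>
      intro I hI σ hσ
      exact hσ _ _ hx
  | @lam Γ B C t ht ih =>
      intro I hI σ hσ
      intro v hv
      apply (CC_stable (A := C) hI).1 _ _
        (Relation.ReflTransGen.single (by exact Lam.Whr.head _ v))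
      rw [Lam.subst_psub_ups]
      apply ih I hI (Lam.scons v σ)
      intro x B' hx
      cases x with
      | zero =>
          cases hx
          exact hv
      | succ x => exact hσ x B' hx
  | app h1 h2 ih1 ih2 =>
      intro I hI σ hσ
      exact ih1 I hI σ hσ _ (ih2 I hI σ hσ)
  | @allI Γ A t ht ih =>
      intro I hI σ hσ
      show _ ∈ ⋂ (G : Set Lam) (_ : CC G), interpC CC A (Interp.cons G I)
      simp only [Set.mem_iInter]
      intro G hG
      apply ih (Interp.cons G I) (fun n => by cases n with | zero => exact hG | succ n => exact hI n)
      intro x B' hx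
      simp only [Ctx.liftTy, Option.map_eq_some_iff] at hx
      obtain ⟨B, hB, rfl⟩ := hx
      rw [Ty.lift0_eq_ren, interpC_ren]
      have : (fun n => Interp.cons G I (Nat.succ n)) = I := by funext n; rfl
      rw [this]
      exact hσ x B hB
  | @allE Γ A t C₀ ht ih =>
      intro I hI σ hσ
      rw [interpC_subst]
      have h1 := ih I hI σ hσ
      simp only [interpC, Set.mem_iInter] at h1
      have h2 := h1 (interpC CC C₀ I) (CC_stable hI)
      have : insertI 0 (interpC CC C₀ I) I = Interp.cons (interpC CC C₀ I) I := by
        funext n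
        cases n with
        | zero => rfl
        | succ n => rfl
      rw [this]
      exact h2

/-- Weak head normalization of typable terms. -/
theorem typable_whn {Γ : Ctx} {t : Lam} {A : Ty} (h : TyJ Γ t A) : t ∈ Lam.Nset := by
  have hI : ∀ n : ℕ, CC ((fun (_ : ℕ) => Lam.Nset) n) := fun _ => CC_N
  have hσ : ∀ (x : ℕ) (B : Ty), Γ x = some B → Lam.var x ∈ interpC CC B (fun _ => Lam.Nset) := by
    intro x B _
    exact (CC_stable hI).2.1 (Lam.Spine.var x)
  have := adequacy h (fun _ => Lam.Nset) hI Lam.var hσ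
  rw [Lam.psub_id] at this
  exact (CC_stable hI).2.2 this
/-! ### The restricted system `TyJn` (no vacuous ∀-introduction), with sizes -/

/-- sized typing derivations for System F with non-vacuous ∀-intro only -/
inductive TyJnN : ℕ → Ctx → Lam → Ty → Prop
  | var {n : ℕ} {Γ : Ctx} {x : ℕ} {A : Ty} : Γ x = some A → TyJnN n Γ (Lam.var x) A
  | lam {n : ℕ} {Γ : Ctx} {B C : Ty} {t : Lam} :
      TyJnN n (Ctx.cons B Γ) t C → TyJnN (n + 1) Γ (Lam.lam t) (Ty.arr B C)
  | app {n m : ℕ} {Γ : Ctx} {B C : Ty} {u v : Lam} :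
      TyJnN n Γ u (Ty.arr B C) → TyJnN m Γ v B → TyJnN (n + m + 1) Γ (Lam.app u v) C
  | allI {n : ℕ} {Γ : Ctx} {A : Ty} {t : Lam} :
      TyJnN n (Ctx.liftTy Γ) t A → 0 ∈ A.fv → TyJnN (n + 1) Γ t (Ty.all A)
  | allE {n : ℕ} {Γ : Ctx} {A : Ty} {t : Lam} (C : Ty) :
      TyJnN n Γ t (Ty.all A) → TyJnN (n + 1) Γ t (Ty.subst A 0 C)

def TyJn (Γ : Ctx) (t : Lam) (A : Ty) : Prop := ∃ n, TyJnN n Γ t A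

lemma tyJnN_tyJ {n : ℕ} {Γ : Ctx} {t : Lam} {A : Ty} (h : TyJnN n Γ t A) : TyJ Γ t A := by
  induction h with
  | var hx => exact TyJ.var hx
  | lam _ ih => exact TyJ.lam ih
  | app _ _ ih1 ih2 => exact TyJ.app ih1 ih2
  | allI _ _ ih => exact TyJ.allI ih
  | allE C _ ih => exact TyJ.allE C ih

lemma tyJn_tyJ {Γ : Ctx} {t : Lam} {A : Ty} (h : TyJn Γ t A) : TyJ Γ t A := by
  obtain ⟨n, h⟩ := h
  exact tyJnN_tyJ h

/-- context renaming of type variables -/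
def Ctx.mapRen (ρ : ℕ → ℕ) (Γ : Ctx) : Ctx := fun x => (Γ x).map (Ty.ren ρ)

lemma ren_lift0_ty (ρ : ℕ → ℕ) (B : Ty) :
    Ty.ren (Ty.upr ρ) (Ty.lift 0 B) = Ty.lift 0 (Ty.ren ρ B) := by
  rw [Ty.lift0_eq_ren, Ty.lift0_eq_ren, Ty.ren_ren, Ty.ren_ren]
  exact Ty.ren_congr (fun n _ => rfl)

lemma mapRen_liftTy (ρ : ℕ → ℕ) (Γ : Ctx) :
    Ctx.mapRen (Ty.upr ρ) (Ctx.liftTy Γ) = Ctx.liftTy (Ctx.mapRen ρ Γ) := by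
  funext x
  show ((Γ x).map (Ty.lift 0)).map (Ty.ren (Ty.upr ρ)) = ((Γ x).map (Ty.ren ρ)).map (Ty.lift 0)
  cases Γ x with
  | none => rfl
  | some B => show some _ = some _; rw [ren_lift0_ty]

/-- type-variable renaming preserves sized derivations -/
lemma tyJnN_ren_ty {n : ℕ} {Γ : Ctx} {t : Lam} {A : Ty} (h : TyJnN n Γ t A) :
    ∀ ρ : ℕ → ℕ, TyJnN n (Ctx.mapRen ρ Γ) t (Ty.ren ρ A) := by
  induction h with
  | var hx =>
      intro ρ
      refine TyJnN.var ?_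
      show (_ : Ctx) _ = _
      simp only [Ctx.mapRen]
      rw [hx]
      rfl
  | @lam n Γ B C t _ ih =>
      intro ρ
      show TyJnN _ _ _ (Ty.arr (Ty.ren ρ B) (Ty.ren ρ C))
      apply TyJnN.lam
      have := ih ρ
      have hc : Ctx.mapRen ρ (Ctx.cons B Γ) = Ctx.cons (Ty.ren ρ B) (Ctx.mapRen ρ Γ) := by
        funext x
        cases x with
        | zero => rfl
        | succ x => rfl
      rwa [hc] at this
  | app _ _ ih1 ih2 =>
      intro ρ
      exact TyJnN.app (ih1 ρ) (ih2 ρ)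
  | @allI n Γ A t _ h0 ih =>
      intro ρ
      show TyJnN _ _ _ (Ty.all (Ty.ren (Ty.upr ρ) A))
      apply TyJnN.allI
      · have := ih (Ty.upr ρ)
        rwa [mapRen_liftTy] at this
      · exact Ty.mem0_fv_ren_upr.2 h0
  | allE C _ ih =>
      intro ρ
      rw [Ty.ren_subst0]
      exact TyJnN.allE (Ty.ren ρ C) (ih ρ)

lemma liftTy_eq_mapRen (Γ : Ctx) : Ctx.liftTy Γ = Ctx.mapRen Nat.succ Γ := by
  funext x
  show (Γ x).map (Ty.lift 0) = (Γ x).map (Ty.ren Nat.succ)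
  cases Γ x with
  | none => rfl
  | some B => show some _ = some _; rw [Ty.lift0_eq_ren]

lemma tyJnN_liftTy {n : ℕ} {Γ : Ctx} {t : Lam} {B : Ty} (h : TyJnN n Γ t B) :
    TyJnN n (Ctx.liftTy Γ) t (Ty.lift 0 B) := by
  rw [liftTy_eq_mapRen, Ty.lift0_eq_ren]
  exact tyJnN_ren_ty h Nat.succ

/-- derivations only depend on the context on free variables -/
lemma tyJnN_mono {n : ℕ} {Γ : Ctx} {t : Lam} {A : Ty} (h : TyJnN n Γ t A) :
    ∀ Γ' : Ctx, (∀ x ∈ t.fv, Γ' x = Γ x) → TyJnN n Γ' t A := by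
  induction h with
  | var hx =>
      intro Γ' hΓ
      exact TyJnN.var ((hΓ _ (by simp)).trans hx)
  | @lam n Γ B C t _ ih =>
      intro Γ' hΓ
      apply TyJnN.lam
      apply ih
      intro x hx
      cases x with
      | zero => rfl
      | succ x =>
          show Γ' x = Γ x
          exact hΓ x (Lam.mem_fv_lam.2 hx)
  | app _ _ ih1 ih2 =>
      intro Γ' hΓ
      exact TyJnN.app
        (ih1 Γ' (fun x hx => hΓ x (by simp [hx])))
        (ih2 Γ' (fun x hx => hΓ x (by simp [hx])))
  | allI _ h0 ih =>
      intro Γ' hΓ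
      refine TyJnN.allI (ih _ (fun x hx => ?_)) h0
      simp only [Ctx.liftTy]
      rw [hΓ x hx]
  | allE C _ ih =>
      intro Γ' hΓ
      exact TyJnN.allE C (ih Γ' hΓ)

/-- context substitution of type variables -/
def Ctx.mapSub (k : ℕ) (C : Ty) (Γ : Ctx) : Ctx := fun x => (Γ x).map (fun B => Ty.subst B k C)

lemma mapSub_liftTy (k : ℕ) (C : Ty) (Γ : Ctx) :
    Ctx.mapSub (k + 1) (Ty.lift 0 C) (Ctx.liftTy Γ) = Ctx.liftTy (Ctx.mapSub k C Γ) := by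
  funext x
  show ((Γ x).map _).map _ = ((Γ x).map _).map _
  cases Γ x with
  | none => rfl
  | some B =>
      show some (Ty.subst (Ty.lift 0 B) (k + 1) (Ty.lift 0 C)) = some (Ty.lift 0 (Ty.subst B k C))
      rw [Ty.lift_subst_commute]

/-- type substitution preserves sized derivations -/
lemma tyJnN_subst_ty {n : ℕ} {Γ : Ctx} {t : Lam} {A : Ty} (h : TyJnN n Γ t A) :
    ∀ (k : ℕ) (C : Ty), TyJnN n (Ctx.mapSub k C Γ) t (Ty.subst A k C) := by
  induction h with
  | var hx =>
      intro k C
      refine TyJnN.var ?_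
      show (_ : Ctx) _ = _
      simp only [Ctx.mapSub]
      rw [hx]
      rfl
  | @lam n Γ B C₂ t _ ih =>
      intro k C
      show TyJnN _ _ _ (Ty.arr (Ty.subst B k C) (Ty.subst C₂ k C))
      apply TyJnN.lam
      have := ih k C
      have hc : Ctx.mapSub k C (Ctx.cons B Γ) = Ctx.cons (Ty.subst B k C) (Ctx.mapSub k C Γ) := by
        funext x
        cases x with
        | zero => rfl
        | succ x => rfl
      rwa [hc] at this
  | app _ _ ih1 ih2 =>
      intro k C
      exact TyJnN.app (ih1 k C) (ih2 k C)
  | @allI n Γ A t _ h0 ih =>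
      intro k C
      show TyJnN _ _ _ (Ty.all (Ty.subst A (k+1) (Ty.lift 0 C)))
      apply TyJnN.allI
      · have := ih (k+1) (Ty.lift 0 C)
        rwa [mapSub_liftTy] at this
      · exact Ty.mem0_fv_subst.2 h0
  | @allE n Γ A t C₁ _ ih =>
      intro k C
      rw [Ty.subst_subst0]
      exact TyJnN.allE (Ty.subst C₁ k C) (ih k C)

lemma tyJnN_inst0 {n : ℕ} {Γ : Ctx} {t : Lam} {A : Ty}
    (h : TyJnN n (Ctx.liftTy Γ) t A) (C : Ty) : TyJnN n Γ t (Ty.subst A 0 C) := by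
  have := tyJnN_subst_ty h 0 C
  have hc : Ctx.mapSub 0 C (Ctx.liftTy Γ) = Γ := by
    funext x
    show ((Γ x).map _).map _ = Γ x
    cases Γ x with
    | none => rfl
    | some B =>
        show some (Ty.subst (Ty.lift 0 B) 0 C) = some B
        rw [Ty.subst_lift0]
  rwa [hc] at this

/-- arrow types reachable from `W` by instantiations -/
inductive AR : Ty → Ty → Ty → Prop
  | base (E T : Ty) : AR (Ty.arr E T) E T
  | step {A E T : Ty} (C : Ty) : AR (Ty.subst A 0 C) E T → AR (Ty.all A) E T

/-- inversion for λ-abstractions -/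
lemma lam_inv_aux (n : ℕ) : ∀ {Γ : Ctx} {s : Lam} {W : Ty}, TyJnN n Γ (Lam.lam s) W →
    ∀ {E T : Ty}, AR W E T → TyJn (Ctx.cons E Γ) s T := by
  induction n using Nat.strong_induction_on with
  | _ n ih =>
      intro Γ s W h E T har
      cases h with
      | lam hs =>
          cases har with
          | base => exact ⟨_, hs⟩
      | allI hprem h0 =>
          cases har with
          | step C har' =>
              rename_i n₀ _
              exact ih n₀ (by omega) (tyJnN_inst0 hprem C) har'
      | allE C hprem =>
          rename_i n₀ _
          exact ih n₀ (by omega) hprem (AR.step C har)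

lemma lam_inv {Γ : Ctx} {s : Lam} {E T : Ty} (h : TyJn Γ (Lam.lam s) (Ty.arr E T)) :
    TyJn (Ctx.cons E Γ) s T := by
  obtain ⟨n, h⟩ := h
  exact lam_inv_aux n h (AR.base E T)

/-- term-variable renaming -/
lemma tyJnN_ren_tm {n : ℕ} {Γ : Ctx} {t : Lam} {A : Ty} (h : TyJnN n Γ t A) :
    ∀ (Γ' : Ctx) (ρ : ℕ → ℕ), (∀ x, Γ' (ρ x) = Γ x) → TyJnN n Γ' (Lam.ren ρ t) A := by
  induction h with
  | var hx =>
      intro Γ' ρ hρ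
      exact TyJnN.var ((hρ _).trans hx)
  | @lam n Γ B C t _ ih =>
      intro Γ' ρ hρ
      apply TyJnN.lam
      apply ih (Ctx.cons B Γ') (Lam.upr ρ)
      intro x
      cases x with
      | zero => rfl
      | succ x => exact hρ x
  | app _ _ ih1 ih2 =>
      intro Γ' ρ hρ
      exact TyJnN.app (ih1 Γ' ρ hρ) (ih2 Γ' ρ hρ)
  | allI _ h0 ih =>
      intro Γ' ρ hρ
      refine TyJnN.allI (ih _ ρ (fun x => ?_)) h0
      simp only [Ctx.liftTy]
      rw [hρ x]
  | allE C _ ih =>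
      intro Γ' ρ hρ
      exact TyJnN.allE C (ih Γ' ρ hρ)

/-- inverse term-variable renaming -/
lemma tyJnN_ren_tm_inv {n : ℕ} {Γ : Ctx} {s : Lam} {A : Ty} (h : TyJnN n Γ s A) :
    ∀ (t : Lam) (ρ : ℕ → ℕ), s = Lam.ren ρ t → TyJnN n (fun x => Γ (ρ x)) t A := by
  induction h with
  | @var n Γ x A hx =>
      intro t ρ he
      cases t with
      | var y =>
          cases he
          exact TyJnN.var hx
      | app a b => exact absurd he (by simp [Lam.ren])
      | lam a => exact absurd he (by simp [Lam.ren])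
  | @lam n Γ B C t0 _ ih =>
      intro t ρ he
      cases t with
      | var y => exact absurd he (by simp [Lam.ren])
      | app a b => exact absurd he (by simp [Lam.ren])
      | lam a =>
          apply TyJnN.lam
          have he' : t0 = Lam.ren (Lam.upr ρ) a := by
            injection he
          have := ih a (Lam.upr ρ) he'
          have hc : (fun x => Ctx.cons B Γ (Lam.upr ρ x)) = Ctx.cons B (fun x => Γ (ρ x)) := by
            funext x
            cases x with
            | zero => rfl
            | succ x => rfl
          rwa [hc] at this
  | @app n m Γ B C u v _ _ ih1 ih2 =>
      intro t ρ he
      cases t with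
      | var y => exact absurd he (by simp [Lam.ren])
      | lam a => exact absurd he (by simp [Lam.ren])
      | app a b =>
          have h1 : u = Lam.ren ρ a := by injection he
          have h2 : v = Lam.ren ρ b := by injection he
          exact TyJnN.app (ih1 a ρ h1) (ih2 b ρ h2)
  | allI _ h0 ih =>
      intro t ρ he
      refine TyJnN.allI ?_ h0
      exact ih t ρ he
  | allE C _ ih =>
      intro t ρ he
      exact TyJnN.allE C (ih t ρ he)

/-- typed parallel substitution -/
lemma tyJnN_psub {n : ℕ} {Γ : Ctx} {t : Lam} {A : Ty} (h : TyJnN n Γ t A) :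
    ∀ (Δ : Ctx) (σ : ℕ → Lam), (∀ x B, Γ x = some B → TyJn Δ (σ x) B) →
      TyJn Δ (Lam.psub σ t) A := by
  induction h with
  | var hx =>
      intro Δ σ hσ
      exact hσ _ _ hx
  | @lam n Γ B C t _ ih =>
      intro Δ σ hσ
      have hσ' : ∀ x B', (Ctx.cons B Γ) x = some B' → TyJn (Ctx.cons B Δ) (Lam.ups σ x) B' := by
        intro x B' hx
        cases x with
        | zero =>
            cases hx
            exact ⟨0, TyJnN.var rfl⟩
        | succ x =>
            obtain ⟨m, hm⟩ := hσ x B' hx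
            exact ⟨m, tyJnN_ren_tm hm (Ctx.cons B Δ) Nat.succ (fun y => rfl)⟩
      obtain ⟨m, hm⟩ := ih (Ctx.cons B Δ) (Lam.ups σ) hσ'
      exact ⟨m + 1, TyJnN.lam hm⟩
  | app _ _ ih1 ih2 =>
      intro Δ σ hσ
      obtain ⟨m1, h1⟩ := ih1 Δ σ hσ
      obtain ⟨m2, h2⟩ := ih2 Δ σ hσ
      exact ⟨m1 + m2 + 1, TyJnN.app h1 h2⟩
  | @allI n Γ A t _ h0 ih =>
      intro Δ σ hσ
      have hσ' : ∀ x B', (Ctx.liftTy Γ) x = some B' → TyJn (Ctx.liftTy Δ) (σ x) B' := by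
        intro x B' hx
        simp only [Ctx.liftTy, Option.map_eq_some_iff] at hx
        obtain ⟨B, hB, rfl⟩ := hx
        obtain ⟨m, hm⟩ := hσ x B hB
        exact ⟨m, tyJnN_liftTy hm⟩
      obtain ⟨m, hm⟩ := ih (Ctx.liftTy Δ) σ hσ'
      exact ⟨m + 1, TyJnN.allI hm h0⟩
  | allE C _ ih =>
      intro Δ σ hσ
      obtain ⟨m, hm⟩ := ih Δ σ hσ
      exact ⟨m + 1, TyJnN.allE C hm⟩

lemma tyJn_subst0 {Γ : Ctx} {s v : Lam} {B C : Ty}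
    (hs : TyJn (Ctx.cons B Γ) s C) (hv : TyJn Γ v B) : TyJn Γ (Lam.subst s 0 v) C := by
  obtain ⟨n, hn⟩ := hs
  rw [Lam.subst_eq_psub]
  apply tyJnN_psub hn Γ (Lam.sσ 0 v)
  intro x B' hx
  cases x with
  | zero =>
      cases hx
      exact hv
  | succ x =>
      rw [Lam.sσ_gt (by omega : 0 < x + 1)]
      have : x + 1 - 1 = x := by omega
      rw [this]
      exact ⟨0, TyJnN.var hx⟩

/-- subject reduction for `TyJn` -/
lemma tyJn_sr {Γ : Ctx} {t t' : Lam} {A : Ty} (h : TyJn Γ t A) (hb : Lam.Beta t t') :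
    TyJn Γ t' A := by
  obtain ⟨n, hn⟩ := h
  induction hn generalizing t' with
  | var hx => exact absurd hb Lam.beta_var
  | lam hs ih =>
      cases hb with
      | lam hb' =>
          obtain ⟨m, hm⟩ := ih hb'
          exact ⟨m + 1, TyJnN.lam hm⟩
  | @app n m Γ B C u v h1 h2 ih1 ih2 =>
      cases hb with
      | beta s u' =>
          exact tyJn_subst0 (lam_inv ⟨n, h1⟩) ⟨m, h2⟩
      | appL u' hb' =>
          obtain ⟨m1, hm1⟩ := ih1 hb'
          exact ⟨m1 + m + 1, TyJnN.app hm1 h2⟩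
      | appR t hb' =>
          obtain ⟨m2, hm2⟩ := ih2 hb'
          exact ⟨n + m2 + 1, TyJnN.app h1 hm2⟩
  | allI _ h0 ih =>
      obtain ⟨m, hm⟩ := ih hb
      exact ⟨m + 1, TyJnN.allI hm h0⟩
  | allE C _ ih =>
      obtain ⟨m, hm⟩ := ih hb
      exact ⟨m + 1, TyJnN.allE C hm⟩

lemma tyJn_srStar {Γ : Ctx} {t t' : Lam} {A : Ty} (h : TyJn Γ t A)
    (hb : Lam.BetaStar t t') : TyJn Γ t' A := by
  induction hb with
  | refl => exact h
  | tail _ h2 ih => exact tyJn_sr ih h2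

/-- types of variable-headed terms in a ∀⁻ context are ∀⁻,
with free variables among those of the context -/
lemma spine_neg {n : ℕ} {Γ : Ctx} {t : Lam} {W : Ty} (h : TyJnN n Γ t W)
    (hsp : Lam.Spine t) (hΓ : ∀ x C, Γ x = some C → NegTy C) :
    NegTy W ∧ ∀ m ∈ W.fv, ∃ x C, Γ x = some C ∧ m ∈ C.fv := by
  induction h with
  | @var n Γ x A hx => exact ⟨hΓ x A hx, fun m hm => ⟨x, A, hx, hm⟩⟩
  | lam _ _ => cases hsp
  | app h1 _ ih1 _ =>
      cases hsp with
      | app u hsp' =>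
          obtain ⟨hneg, hfv⟩ := ih1 hsp' hΓ
          cases hneg with
          | arr hB hA =>
              exact ⟨hA, fun m hm => hfv m (by simp [hm])⟩
  | @allI n Γ A t _ h0 ih =>
      have hΓ' : ∀ x C, Ctx.liftTy Γ x = some C → NegTy C := by
        intro x C hx
        simp only [Ctx.liftTy, Option.map_eq_some_iff] at hx
        obtain ⟨B, hB, rfl⟩ := hx
        exact Ty.negTy_lift (hΓ x B hB) 0
      obtain ⟨hneg, hfv⟩ := ih hsp hΓ'
      obtain ⟨x, C, hx, h0C⟩ := hfv 0 h0
      simp only [Ctx.liftTy, Option.map_eq_some_iff] at hx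
      obtain ⟨B, hB, rfl⟩ := hx
      rw [Ty.lift0_eq_ren, Ty.fv_ren] at h0C
      obtain ⟨j, _, hj⟩ := h0C
      exact absurd hj (by omega)
  | allE C hprem ih =>
      obtain ⟨hneg, _⟩ := ih hsp hΓ
      cases hneg

lemma var_ty_inv_aux {n : ℕ} {Γ : Ctx} {t : Lam} {C : Ty} (h : TyJnN n Γ t C) :
    ∀ x B, t = Lam.var x → Γ x = some B → NegTy B → C = B := by
  induction h with
  | var hx =>
      intro x B he hB _
      cases he
      rw [hx] at hB
      exact (Option.some.inj hB)
  | lam _ _ => intro x B he; exact absurd he (by simp)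
  | app _ _ _ _ => intro x B he; exact absurd he (by simp)
  | @allI n Γ A t hprem h0 ih =>
      intro x B he hB hneg
      subst he
      have hA : A = Ty.lift 0 B := by
        apply ih x (Ty.lift 0 B) rfl _ (Ty.negTy_lift hneg 0)
        show (Γ x).map _ = some (Ty.lift 0 B)
        rw [hB]
        rfl
      subst hA
      rw [Ty.lift0_eq_ren, Ty.fv_ren] at h0
      obtain ⟨j, _, hj⟩ := h0
      exact absurd hj (by omega)
  | @allE n Γ A t C₀ hprem ih =>
      intro x B he hB hneg
      subst he
      have hall : Ty.all A = B := ih x B rfl hB hneg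
      rw [← hall] at hneg
      cases hneg

/-- in the restricted system, a variable has exactly its declared ∀⁻ type -/
lemma var_ty_inv {n : ℕ} {Γ : Ctx} {x : ℕ} {C : Ty} (h : TyJnN n Γ (Lam.var x) C) :
    ∀ B, Γ x = some B → NegTy B → C = B := fun B => var_ty_inv_aux h x B rfl

/-- inversion of an application of a spine to a ∀⁻ variable -/
lemma spine_app_inv {n : ℕ} {Γ : Ctx} {t : Lam} {x : ℕ} {A B : Ty}
    (h : TyJnN n Γ (Lam.app t (Lam.var x)) A) (hsp : Lam.Spine t)
    (hx : Γ x = some B) (hΓ : ∀ y C, Γ y = some C → NegTy C) :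
    TyJn Γ t (Ty.arr B A) := by
  cases h with
  | @app n m _ B₀ _ _ _ h1 h2 =>
      have : B₀ = B := var_ty_inv h2 B hx (hΓ x B hx)
      subst this
      exact ⟨n, h1⟩
  | allI hprem h0 =>
      have hΓ' : ∀ y C, Ctx.liftTy Γ y = some C → NegTy C := by
        intro y C hy
        simp only [Ctx.liftTy, Option.map_eq_some_iff] at hy
        obtain ⟨B', hB', rfl⟩ := hy
        exact Ty.negTy_lift (hΓ y B' hB') 0
      obtain ⟨_, hfv⟩ := spine_neg hprem (hsp.app _) hΓ'
      obtain ⟨y, C, hy, h0C⟩ := hfv 0 h0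
      simp only [Ctx.liftTy, Option.map_eq_some_iff] at hy
      obtain ⟨B', hB', rfl⟩ := hy
      rw [Ty.lift0_eq_ren, Ty.fv_ren] at h0C
      obtain ⟨j, _, hj⟩ := h0C
      exact absurd hj (by omega)
  | allE C hprem =>
      obtain ⟨hneg, _⟩ := spine_neg hprem (hsp.app _) hΓ
      cases hneg
/-! ### Normalizing derivations into `TyJn`, and plain `TyJ` utilities -/

lemma Ty.ren_pred_lift0 (B : Ty) : Ty.ren Nat.pred (Ty.lift 0 B) = B := by
  rw [Ty.lift0_eq_ren, Ty.ren_ren]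
  exact Ty.ren_id (fun n _ => rfl)

lemma Ty.subst0_not_free {T : Ty} (h : 0 ∉ T.fv) (D : Ty) :
    Ty.subst T 0 D = Ty.ren Nat.pred T := by
  rw [Ty.subst_eq_psub, Ty.ren_eq_psub]
  apply Ty.psub_congr
  intro n hn
  have hn0 : n ≠ 0 := fun h0 => h (h0 ▸ hn)
  obtain ⟨m, rfl⟩ := Nat.exists_eq_succ_of_ne_zero hn0
  rw [Ty.sσ_gt (by omega : 0 < m + 1)]
  rfl

def Ctx.mapNf (Γ : Ctx) : Ctx := fun x => (Γ x).map Ty.nf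

lemma mapNf_liftTy (Γ : Ctx) : Ctx.mapNf (Ctx.liftTy Γ) = Ctx.liftTy (Ctx.mapNf Γ) := by
  funext x
  show ((Γ x).map _).map _ = ((Γ x).map _).map _
  cases Γ x with
  | none => rfl
  | some B =>
      show some (Ty.nf (Ty.lift 0 B)) = some (Ty.lift 0 (Ty.nf B))
      rw [Ty.nf_lift0]

lemma mapRen_pred_liftTy (Δ : Ctx) : Ctx.mapRen Nat.pred (Ctx.liftTy Δ) = Δ := by
  funext x
  show ((Δ x).map _).map _ = Δ x
  cases Δ x with
  | none => rfl
  | some B =>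
      show some (Ty.ren Nat.pred (Ty.lift 0 B)) = some B
      rw [Ty.ren_pred_lift0]

/-- every System F derivation normalizes to a `TyJn` derivation of the
vacuity-normalized judgement -/
lemma tyJ_tyJn {Γ : Ctx} {t : Lam} {A : Ty} (h : TyJ Γ t A) :
    TyJn (Ctx.mapNf Γ) t (Ty.nf A) := by
  induction h with
  | @var Γ x A hx =>
      refine ⟨0, TyJnN.var ?_⟩
      show (Γ x).map _ = _
      rw [hx]
      rfl
  | @lam Γ B C t _ ih =>
      obtain ⟨n, hn⟩ := ih
      refine ⟨n + 1, ?_⟩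
      show TyJnN _ _ _ (Ty.arr (Ty.nf B) (Ty.nf C))
      apply TyJnN.lam
      have hc : Ctx.mapNf (Ctx.cons B Γ) = Ctx.cons (Ty.nf B) (Ctx.mapNf Γ) := by
        funext x
        cases x with
        | zero => rfl
        | succ x => rfl
      rwa [hc] at hn
  | app _ _ ih1 ih2 =>
      obtain ⟨n, hn⟩ := ih1
      obtain ⟨m, hm⟩ := ih2
      exact ⟨n + m + 1, TyJnN.app hn hm⟩
  | @allI Γ A t _ ih =>
      obtain ⟨n, hn⟩ := ih
      rw [mapNf_liftTy] at hn
      show TyJn _ _ (Ty.nf (Ty.all A))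
      by_cases h0 : 0 ∈ (Ty.nf A).fv
      · rw [show Ty.nf (Ty.all A) = Ty.all (Ty.nf A) from by rw [Ty.nf]; rw [if_pos h0]]
        exact ⟨n + 1, TyJnN.allI hn h0⟩
      · rw [show Ty.nf (Ty.all A) = Ty.ren Nat.pred (Ty.nf A) from by rw [Ty.nf]; rw [if_neg h0]]
        have := tyJnN_ren_ty hn Nat.pred
        rw [mapRen_pred_liftTy] at this
        exact ⟨n, this⟩
  | @allE Γ A t C _ ih =>
      obtain ⟨n, hn⟩ := ih
      rw [Ty.nf_subst]
      by_cases h0 : 0 ∈ (Ty.nf A).fv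
      · rw [show Ty.nf (Ty.all A) = Ty.all (Ty.nf A) from by rw [Ty.nf]; rw [if_pos h0]] at hn
        exact ⟨n + 1, TyJnN.allE (Ty.nf C) hn⟩
      · rw [show Ty.nf (Ty.all A) = Ty.ren Nat.pred (Ty.nf A) from by rw [Ty.nf]; rw [if_neg h0]] at hn
        rw [Ty.subst0_not_free h0]
        exact ⟨n, hn⟩

/-- plain `TyJ` only depends on the context on free variables -/
lemma tyJ_mono {Γ : Ctx} {t : Lam} {A : Ty} (h : TyJ Γ t A) :
    ∀ Γ' : Ctx, (∀ x ∈ t.fv, Γ' x = Γ x) → TyJ Γ' t A := by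
  induction h with
  | var hx =>
      intro Γ' hΓ
      exact TyJ.var ((hΓ _ (by simp)).trans hx)
  | @lam Γ B C t _ ih =>
      intro Γ' hΓ
      apply TyJ.lam
      apply ih
      intro x hx
      cases x with
      | zero => rfl
      | succ x =>
          show Γ' x = Γ x
          exact hΓ x (Lam.mem_fv_lam.2 hx)
  | app _ _ ih1 ih2 =>
      intro Γ' hΓ
      exact TyJ.app
        (ih1 Γ' (fun x hx => hΓ x (by simp [hx])))
        (ih2 Γ' (fun x hx => hΓ x (by simp [hx])))
  | allI _ ih =>
      intro Γ' hΓ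
      refine TyJ.allI (ih _ (fun x hx => ?_))
      simp only [Ctx.liftTy]
      rw [hΓ x hx]
  | allE C _ ih =>
      intro Γ' hΓ
      exact TyJ.allE C (ih Γ' hΓ)

/-- type-variable renaming for plain `TyJ` -/
lemma tyJ_ren_ty {Γ : Ctx} {t : Lam} {A : Ty} (h : TyJ Γ t A) :
    ∀ ρ : ℕ → ℕ, TyJ (Ctx.mapRen ρ Γ) t (Ty.ren ρ A) := by
  induction h with
  | @var Γ x A hx =>
      intro ρ
      refine TyJ.var ?_
      show (Γ x).map _ = _
      rw [hx]
      rfl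
  | @lam Γ B C t _ ih =>
      intro ρ
      show TyJ _ _ (Ty.arr (Ty.ren ρ B) (Ty.ren ρ C))
      apply TyJ.lam
      have := ih ρ
      have hc : Ctx.mapRen ρ (Ctx.cons B Γ) = Ctx.cons (Ty.ren ρ B) (Ctx.mapRen ρ Γ) := by
        funext x
        cases x with
        | zero => rfl
        | succ x => rfl
      rwa [hc] at this
  | app _ _ ih1 ih2 =>
      intro ρ
      exact TyJ.app (ih1 ρ) (ih2 ρ)
  | @allI Γ A t _ ih =>
      intro ρ
      show TyJ _ _ (Ty.all (Ty.ren (Ty.upr ρ) A))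
      apply TyJ.allI
      have := ih (Ty.upr ρ)
      rwa [mapRen_liftTy] at this
  | allE C _ ih =>
      intro ρ
      rw [Ty.ren_subst0]
      exact TyJ.allE (Ty.ren ρ C) (ih ρ)

namespace Lam

lemma betaStar_appL_cong {t t' : Lam} (s : Lam) (h : BetaStar t t') :
    BetaStar (app t s) (app t' s) := by
  induction h with
  | refl => exact Relation.ReflTransGen.refl
  | tail _ h2 ih => exact ih.tail (Beta.appL s h2)

lemma betaStar_appR_cong (t : Lam) {s s' : Lam} (h : BetaStar s s') :
    BetaStar (app t s) (app t s') := by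
  induction h with
  | refl => exact Relation.ReflTransGen.refl
  | tail _ h2 ih => exact ih.tail (Beta.appR t h2)

lemma betaStar_lam_cong {t t' : Lam} (h : BetaStar t t') :
    BetaStar (lam t) (lam t') := by
  induction h with
  | refl => exact Relation.ReflTransGen.refl
  | tail _ h2 ih => exact ih.tail (Beta.lam h2)

end Lam

/-! glue about `ctxOf` and `DerPlus` -/

lemma ctxOf_mem {Γm : ℕ → Ty} {u : Lam} {x : ℕ} (h : x ∈ u.fv) :
    ctxOf Γm u x = some (Γm x) := if_pos h

lemma ctxOf_negCtx {Γm : ℕ → Ty} (hneg : ∀ i, NegTy (Γm i)) (u : Lam) :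
    ∀ x C, ctxOf Γm u x = some C → NegTy C := by
  intro x C h
  by_cases hx : x ∈ u.fv
  · rw [ctxOf_mem hx] at h
    cases h
    exact hneg x
  · rw [show ctxOf Γm u x = none from if_neg hx] at h
    cases h

lemma mapNf_ctxOf {Γm : ℕ → Ty} (hneg : ∀ i, NegTy (Γm i)) (u : Lam) :
    Ctx.mapNf (ctxOf Γm u) = ctxOf Γm u := by
  funext x
  show (ctxOf Γm u x).map _ = _
  by_cases hx : x ∈ u.fv
  · rw [ctxOf_mem hx]
    show some (Ty.nf (Γm x)) = some (Γm x)
    rw [Ty.nf_fix ((Ty.pos_neg_novac (Γm x)).2 (hneg x))]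
  · rw [show ctxOf Γm u x = none from if_neg hx]
    rfl

lemma ctxOf_agree {Γm : ℕ → Ty} {u w : Lam} (h : u.fv ⊆ w.fv) :
    ∀ x ∈ u.fv, ctxOf Γm w x = ctxOf Γm u x := by
  intro x hx
  rw [ctxOf_mem (h hx), ctxOf_mem hx]

lemma derPlus_beta {Γm : ℕ → Ty} {τ τ' : Lam} {A : Ty} (h : Lam.BetaStar τ τ')
    (hD : DerPlus Γm τ' A) : DerPlus Γm τ A := by
  obtain ⟨u, hu, hty⟩ := hD
  exact ⟨u, h.trans hu, hty⟩

lemma sat_derPlus (Γm : ℕ → Ty) (X : ℕ) :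
    Saturated {τ | DerPlus Γm τ (Ty.var X)} := by
  intro t u h hu
  exact derPlus_beta (Lam.whrStar_betaStar h) hu

lemma tsize_pos (S : Ty) : 1 ≤ Ty.tsize S := by
  cases S <;> simp [Ty.tsize]
lemma interp_var (X : ℕ) (I : Interp) : interp (Ty.var X) I = I X := rfl
lemma interp_arr (B A : Ty) (I : Interp) :
    interp (Ty.arr B A) I = arrowSet (interp B I) (interp A I) := rfl
lemma interp_all (A : Ty) (I : Interp) :
    interp (Ty.all A) I = ⋂ (G : Set Lam) (_ : Saturated G), interp A (Interp.cons G I) := rfl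

/-- Lemma 2: with `Γ⁻` an assignment of ∀⁻ types where each ∀⁻ type
occurs infinitely often, and `𝓘` interpreting `X` as `{τ : Γ⁻ ⊢_F⁺ τ : X}`:
(i) if `S` is ∀⁺ and `τ ∈ |S|_𝓘` then `Γ⁻ ⊢_F⁺ τ : S`;
(ii) if `S` is ∀⁻ and `Γ⁻ ⊢_F⁺ τ : S` then `τ ∈ |S|_𝓘`. -/
theorem lemma_two (Γm : ℕ → Ty) (hneg : ∀ i, NegTy (Γm i))
    (hinf : ∀ A, NegTy A → {i | Γm i = A}.Infinite) :
    (∀ (S : Ty) (τ : Lam), PosTy S →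
        τ ∈ interp S (fun X => {τ | DerPlus Γm τ (Ty.var X)}) → DerPlus Γm τ S) ∧
    (∀ (S : Ty) (τ : Lam), NegTy S →
        DerPlus Γm τ S → τ ∈ interp S (fun X => {τ | DerPlus Γm τ (Ty.var X)})) := by
  set 𝓘 : Interp := fun X => {τ | DerPlus Γm τ (Ty.var X)} with h𝓘
  suffices H : ∀ N : ℕ, ∀ S : Ty, Ty.tsize S ≤ N →
      ((PosTy S → ∀ τ : Lam, τ ∈ interp S 𝓘 → DerPlus Γm τ S) ∧
       (NegTy S → ∀ τ : Lam, DerPlus Γm τ S → τ ∈ interp S 𝓘)) by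
    exact ⟨fun S τ hp hm => (H (Ty.tsize S) S le_rfl).1 hp τ hm,
           fun S τ hn hd => (H (Ty.tsize S) S le_rfl).2 hn τ hd⟩
  intro N
  induction N with
  | zero =>
      intro S hS
      exact absurd hS (by have := tsize_pos S; omega)
  | succ N ih =>
    intro S hS
    constructor
    · -- (i) : positive types
      intro hpos τ hτ
      cases hpos with
      | var X => exact hτ
      | @arr B A hB hA =>
          have hsB : Ty.tsize B ≤ N := by
            have h1 := tsize_pos A
            simp only [Ty.tsize] at hS
            omega
          have hsA : Ty.tsize A ≤ N := by
            have h1 := tsize_pos B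
            simp only [Ty.tsize] at hS
            omega
          obtain ⟨x, hxB, hxτ⟩ := (hinf B hB).exists_notMem_finset τ.fv
          have hxB' : Γm x = B := hxB
          have hvar : Lam.var x ∈ interp B 𝓘 := by
            apply (ih B hsB).2 hB
            refine ⟨Lam.var x, Relation.ReflTransGen.refl, TyJ.var ?_⟩
            rw [ctxOf_mem (by simp : x ∈ (Lam.var x).fv), hxB']
          rw [interp_arr] at hτ
          have happ : Lam.app τ (Lam.var x) ∈ interp A 𝓘 := hτ _ hvar
          obtain ⟨w, hwβ, hwty⟩ := (ih A hsA).1 hA _ happ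
          have hwty' : TyJn (ctxOf Γm w) w A := by
            have := tyJ_tyJn hwty
            rwa [mapNf_ctxOf hneg, Ty.nf_fix ((Ty.pos_neg_novac A).1 hA)] at this
          obtain ⟨v, hvwhr, hvnf⟩ := typable_whn hwty
          have hvty : TyJn (ctxOf Γm w) v A :=
            tyJn_srStar hwty' (Lam.whrStar_betaStar hvwhr)
          have hvw : v.fv ⊆ w.fv := Lam.fv_betaStar (Lam.whrStar_betaStar hvwhr)
          have hred : Lam.BetaStar (Lam.app τ (Lam.var x)) v :=
            hwβ.trans (Lam.whrStar_betaStar hvwhr)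
          rcases Lam.app_var_reducts hred with ⟨τ₁, rfl, hττ₁⟩ | ⟨t, hτlam, hsub⟩
          · -- spine case
            have hsp : Lam.Spine τ₁ := by
              rcases hvnf with ⟨s, hs⟩ | hsp
              · exact absurd hs (by intro h; cases h)
              · cases hsp with
                | app _ h => exact h
            have hxw : x ∈ w.fv := hvw (by simp)
            obtain ⟨n, hn⟩ := hvty
            have hinv := spine_app_inv hn hsp
              (by rw [ctxOf_mem hxw, hxB']) (ctxOf_negCtx hneg w)
            obtain ⟨m, hm⟩ := hinv
            have hτ₁fv : τ₁.fv ⊆ w.fv := fun y hy => hvw (by simp [hy])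
            have hm' := tyJnN_mono hm (ctxOf Γm τ₁) (fun y hy => by
              rw [ctxOf_mem hy, ctxOf_mem (hτ₁fv hy)])
            exact ⟨τ₁, hττ₁, tyJnN_tyJ hm'⟩
          · -- abstraction case
            have hfvlam : x ∉ (Lam.lam t).fv := fun hmem => hxτ (Lam.fv_betaStar hτlam hmem)
            have hfvt : x + 1 ∉ t.fv := fun hmem => hfvlam (Lam.mem_fv_lam.2 hmem)
            rw [Lam.subst_var0_eq_ren] at hsub
            obtain ⟨t₁, htt₁, rfl, hfv₁⟩ := Lam.betaStar_reflect hfvt hsub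
            obtain ⟨n, hn⟩ := hvty
            have hinv := tyJnN_ren_tm_inv hn t₁ (Lam.ρv x) rfl
            have hfvren : ∀ y ∈ t₁.fv, Lam.ρv x y ∈ w.fv := by
              intro y hy
              apply hvw
              rw [Lam.fv_ren]
              exact ⟨y, hy, rfl⟩
            have hm' := tyJnN_mono hinv (Ctx.cons B (ctxOf Γm (Lam.lam t₁))) (fun y hy => by
              cases y with
              | zero =>
                  show some B = ctxOf Γm w x
                  have hxw : x ∈ w.fv := hfvren 0 hy
                  rw [ctxOf_mem hxw, hxB']
              | succ y =>
                  show ctxOf Γm (Lam.lam t₁) y = ctxOf Γm w y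
                  have hyw : y ∈ w.fv := hfvren (y+1) hy
                  rw [ctxOf_mem (Lam.mem_fv_lam.2 hy), ctxOf_mem hyw])
            exact ⟨Lam.lam t₁, hτlam.trans (Lam.betaStar_lam_cong htt₁),
              tyJnN_tyJ (TyJnN.lam hm')⟩
      | @all A hA h0 =>
          have hsA : Ty.tsize A ≤ N := by
            simp only [Ty.tsize] at hS
            omega
          set F : Finset ℕ := A.fv ∪ τ.fv.biUnion (fun x => (Γm x).fv) with hF
          set Y : ℕ := F.sup id + 1 with hYdef
          have hYnot : ∀ m ∈ F, m < Y := by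
            intro m hm
            have := Finset.le_sup (f := id) hm
            simp only [id] at this
            omega
          have hYA : Y ∉ A.fv := fun h =>
            absurd (hYnot Y (Finset.mem_union_left _ h)) (lt_irrefl Y)
          have hY1A : Y + 1 ∉ A.fv := fun h => by
            have := hYnot (Y + 1) (Finset.mem_union_left _ h)
            omega
          have hYΓ : ∀ x ∈ τ.fv, Y ∉ (Γm x).fv := fun x hx h => by
            have := hYnot Y (Finset.mem_union_right _ (Finset.mem_biUnion.2 ⟨x, hx, h⟩))
            omega
          have hsatY : Saturated (𝓘 Y) := sat_derPlus Γm Y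
          have hτY : τ ∈ interp A (Interp.cons (𝓘 Y) 𝓘) := by
            rw [interp_all] at hτ
            exact Set.mem_iInter₂.1 hτ (𝓘 Y) hsatY
          have hsub : τ ∈ interp (Ty.subst A 0 (Ty.var Y)) 𝓘 := by
            show τ ∈ interpC Saturated _ 𝓘
            rw [interpC_subst]
            have hins : insertI 0 (interpC Saturated (Ty.var Y) 𝓘) 𝓘 = Interp.cons (𝓘 Y) 𝓘 := by
              funext n
              cases n with
              | zero => rfl
              | succ n => rfl
            rw [hins]
            exact hτY
          have hpos' : PosTy (Ty.subst A 0 (Ty.var Y)) := Ty.posTy_subst_var hA 0 Y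
          have hsize' : Ty.tsize (Ty.subst A 0 (Ty.var Y)) ≤ N := by
            rw [Ty.tsize_subst_var]
            exact hsA
          obtain ⟨u, hub, huty⟩ := (ih _ hsize').1 hpos' τ hsub
          set σ : ℕ → ℕ := fun m => if m = Y then 0 else m + 1 with hσ
          have hren := tyJ_ren_ty huty σ
          have hA' : Ty.ren σ (Ty.subst A 0 (Ty.var Y)) = A := by
            rw [Ty.subst_var_eq_ren, Ty.ren_ren]
            apply Ty.ren_id
            intro n hn
            cases n with
            | zero =>
                show σ (Ty.srρ 0 Y 0) = 0
                have h1 : Ty.srρ 0 Y 0 = Y := by simp [Ty.srρ]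
                rw [h1]
                simp [hσ]
            | succ m =>
                show σ (Ty.srρ 0 Y (m+1)) = m + 1
                have h1 : Ty.srρ 0 Y (m+1) = m := by
                  simp only [Ty.srρ]
                  rw [if_neg (by omega : ¬ (m + 1 = 0)), if_pos (by omega : 0 < m + 1)]
                  omega
                rw [h1]
                have hm : m ≠ Y := fun he => hY1A (he ▸ hn)
                simp [hσ, hm]
          have hctx : Ctx.mapRen σ (ctxOf Γm u) = Ctx.liftTy (ctxOf Γm u) := by
            funext y
            show (ctxOf Γm u y).map _ = (ctxOf Γm u y).map _
            by_cases hy : y ∈ u.fv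
            · rw [ctxOf_mem hy]
              show some (Ty.ren σ (Γm y)) = some (Ty.lift 0 (Γm y))
              rw [Ty.lift0_eq_ren]
              congr 1
              apply Ty.ren_congr
              intro m hm
              have hmY : m ≠ Y := fun he => hYΓ y (Lam.fv_betaStar hub hy) (he ▸ hm)
              simp [hσ, hmY]
            · rw [show ctxOf Γm u y = none from if_neg hy]
              rfl
          rw [hA', hctx] at hren
          exact ⟨u, hub, TyJ.allI hren⟩
    · -- (ii) : negative types
      intro hneg' τ hD
      cases hneg' with
      | var X => exact hD
      | @arr B A hB hA =>
          have hsB : Ty.tsize B ≤ N := by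
            have h1 := tsize_pos A
            simp only [Ty.tsize] at hS
            omega
          have hsA : Ty.tsize A ≤ N := by
            have h1 := tsize_pos B
            simp only [Ty.tsize] at hS
            omega
          rw [interp_arr]
          intro t ht
          obtain ⟨t', htβ, htty⟩ := (ih B hsB).1 hB t ht
          obtain ⟨τ', hτβ, hτty⟩ := hD
          have hsub1 : τ'.fv ⊆ (Lam.app τ' t').fv := Finset.subset_union_left
          have hsub2 : t'.fv ⊆ (Lam.app τ' t').fv := Finset.subset_union_right
          have h1 : TyJ (ctxOf Γm (Lam.app τ' t')) τ' (Ty.arr B A) :=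
            tyJ_mono hτty _ (ctxOf_agree hsub1)
          have h2 : TyJ (ctxOf Γm (Lam.app τ' t')) t' B :=
            tyJ_mono htty _ (ctxOf_agree hsub2)
          have hred : Lam.BetaStar (Lam.app τ t) (Lam.app τ' t') :=
            (Lam.betaStar_appL_cong t hτβ).trans (Lam.betaStar_appR_cong τ' htβ)
          exact (ih A hsA).2 hA _ ⟨_, hred, TyJ.app h1 h2⟩
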